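/- arXiv:2301.03494 — 5 statements merged into one kernel-verified Lean document; each statement's English description precedes it below -/
import Mathlib

section
/- Let 𝒰 = { p ∈ P¹_ℂ : p ≠ diag(0,1) }, equivalently the set of matrices [[a, b],[conj(b), 1−a]] with a real, 0 < a ≤ 1, b ∈ ℂ and a² + |b|² = a. For u = [[a, b],[conj(b), 1−a]] ∈ 𝒰, set ρ = √a, σ = −b/ρ, and g_u = [[ρ, σ],[−conj(σ), ρ]]. Then g_u ∈ SU(2), g_u · diag(1,0) · g_u^{-1} = u for every u ∈ 𝒰, and the map u ↦ g_u is smooth on 𝒰. -/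
noncomputable section

attribute [local instance] Matrix.normedAddCommGroup Matrix.normedSpace

/-- The complex projective line, realized as the set of orthogonal projections of `ℂ²` onto
lines: matrices `p` with `p⋆ = p = p²` and `trace p = 1`. -/
def P1C : Set (Matrix (Fin 2) (Fin 2) ℂ) :=
  { p | p.conjTranspose = p ∧ p * p = p ∧ p.trace = 1 }

/-- The open subset `𝒰 = P¹_ℂ ∖ {diag (0,1)}` of the complex projective line. -/
def su2U : Set (Matrix (Fin 2) (Fin 2) ℂ) :=
  { p | p ∈ P1C ∧ p ≠ !![0, 0; 0, 1] }

/-- The map `u ↦ g_u` of Lemma 2: for `u = [[a, b], [conj b, 1-a]]` it returns the matrix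
`[[ρ, σ], [-conj σ, ρ]]` where `ρ = √a` and `σ = -b/ρ`. -/
def su2GMap (u : Matrix (Fin 2) (Fin 2) ℂ) : Matrix (Fin 2) (Fin 2) ℂ :=
  !![(Real.sqrt (u 0 0).re : ℂ), -(u 0 1) / (Real.sqrt (u 0 0).re : ℂ);
     (starRingEnd ℂ) (u 0 1) / (Real.sqrt (u 0 0).re : ℂ), (Real.sqrt (u 0 0).re : ℂ)]

/-- Characterization of `𝒰` as the set of matrices `[[a, b], [conj b, 1-a]]`. -/
theorem su2U_char :
    su2U = { u | ∃ (a : ℝ) (b : ℂ), 0 < a ∧ a ≤ 1 ∧ a ^ 2 + ‖b‖ ^ 2 = a ∧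
        u = !![(a : ℂ), b; (starRingEnd ℂ) b, 1 - (a : ℂ)] } := by
  ext p
  constructor
  · rintro ⟨⟨hherm, hidem, htr⟩, hne⟩
    have h00 : (starRingEnd ℂ) (p 0 0) = p 0 0 := by
      have := congrFun (congrFun hherm 0) 0
      simpa [Matrix.conjTranspose_apply] using this
    have h10 : p 1 0 = (starRingEnd ℂ) (p 0 1) := by
      have := congrFun (congrFun hherm 1) 0
      simpa [Matrix.conjTranspose_apply] using this.symm
    rw [Matrix.trace_fin_two] at htr
    have hsq := congrFun (congrFun hidem 0) 0
    rw [Matrix.mul_apply, Fin.sum_univ_two] at hsq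
    set a : ℝ := (p 0 0).re with ha
    have hpa : p 0 0 = (a : ℝ) := (Complex.conj_eq_iff_re.mp h00).symm
    set b : ℂ := p 0 1 with hb
    have hp11 : p 1 1 = 1 - (a : ℂ) := by rw [hpa] at htr; linear_combination htr
    have key : (a : ℂ) ^ 2 + (‖b‖ : ℂ) ^ 2 = (a : ℂ) := by
      rw [hpa, h10] at hsq
      have habs : ((‖b‖ : ℂ)) ^ 2 = b * (starRingEnd ℂ) b := by
        rw [← Complex.ofReal_pow, Complex.sq_norm, Complex.mul_conj]
      linear_combination hsq + habs
    have keyR : a ^ 2 + ‖b‖ ^ 2 = a := by exact_mod_cast key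
    have hform : p = !![(a : ℂ), b; (starRingEnd ℂ) b, 1 - (a : ℂ)] := by
      ext i j
      fin_cases i <;> fin_cases j <;>
        simp [hpa, hb, h10, hp11]
    have ha0 : 0 ≤ a := by nlinarith [sq_nonneg (‖b‖), norm_nonneg b]
    have hapos : 0 < a := by
      rcases ha0.lt_or_eq with h | h
      · exact h
      · exfalso
        apply hne
        have hb0 : b = 0 := by
          have : ‖b‖ = 0 := by nlinarith
          simpa using this
        rw [hform, ← h, hb0]
        norm_num
    refine ⟨a, b, hapos, ?_, keyR, hform⟩
    nlinarith [sq_nonneg (‖b‖)]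
  · rintro ⟨a, b, ha, ha1, hab, rfl⟩
    have habC : (a : ℂ) ^ 2 + b * (starRingEnd ℂ) b = (a : ℂ) := by
      rw [Complex.mul_conj, ← Complex.sq_norm]
      exact_mod_cast hab
    refine ⟨⟨?_, ?_, ?_⟩, ?_⟩
    · ext i j
      fin_cases i <;> fin_cases j <;> simp [Matrix.conjTranspose_apply]
    · ext i j
      rw [Matrix.mul_apply, Fin.sum_univ_two]
      fin_cases i <;> fin_cases j <;> simp <;> ring_nf <;>
        linear_combination habC
    · simp [Matrix.trace_fin_two]
    · intro h
      have := congrFun (congrFun h 0) 0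
      simp at this
      exact absurd this (by exact_mod_cast ha.ne')

theorem su2GMap_spec {a : ℝ} {b : ℂ} (ha : 0 < a) (hab : a ^ 2 + ‖b‖ ^ 2 = a)
    (u : Matrix (Fin 2) (Fin 2) ℂ)
    (hu : u = !![(a : ℂ), b; (starRingEnd ℂ) b, 1 - (a : ℂ)]) :
    su2GMap u ∈ Matrix.specialUnitaryGroup (Fin 2) ℂ ∧
      su2GMap u * !![1, 0; 0, 0] * (su2GMap u)⁻¹ = u := by
  have hu00 : u 0 0 = (a : ℂ) := by rw [hu]; simp
  have hu01 : u 0 1 = b := by rw [hu]; simp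
  set ρ : ℂ := (Real.sqrt a : ℂ) with hρ
  have hρ2 : ρ * ρ = (a : ℂ) := by
    rw [hρ, ← Complex.ofReal_mul, Real.mul_self_sqrt ha.le]
  have hρne : ρ ≠ 0 := by
    simp only [hρ, Complex.ofReal_ne_zero]
    positivity
  have hbb : b * (starRingEnd ℂ) b = (a : ℂ) - (a : ℂ) ^ 2 := by
    rw [Complex.mul_conj, ← Complex.sq_norm]
    have : (‖b‖ : ℝ) ^ 2 = a - a ^ 2 := by linarith
    exact_mod_cast congrArg (Complex.ofReal) this
  have hg : su2GMap u = !![ρ, -b / ρ; (starRingEnd ℂ) b / ρ, ρ] := by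
    rw [su2GMap, hu00, hu01]
    norm_num
    simp [hρ]
  have hstar : star (su2GMap u) = !![ρ, b / ρ; -((starRingEnd ℂ) b) / ρ, ρ] := by
    rw [hg]
    ext i j
    fin_cases i <;> fin_cases j <;>
      simp [Matrix.conjTranspose_apply, hρ, map_div₀]
  have hunit : su2GMap u * star (su2GMap u) = 1 := by
    rw [hstar, hg]
    ext i j
    rw [Matrix.mul_apply, Fin.sum_univ_two]
    fin_cases i <;> fin_cases j <;> (try simp [Matrix.one_apply]) <;> (try field_simp) <;>
      first
      | linear_combination (ρ * ρ + (a:ℂ) - 1) * hρ2 + hbb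
      | linear_combination hbb + ((a:ℂ) - 1) * hρ2
      | linear_combination hρ2
      | ring
  have hdet : (su2GMap u).det = 1 := by
    rw [hg, Matrix.det_fin_two_of]
    field_simp
    linear_combination (ρ * ρ + (a:ℂ) - 1) * hρ2 + hbb
  have hinv : (su2GMap u)⁻¹ = star (su2GMap u) := Matrix.inv_eq_right_inv hunit
  constructor
  · exact Matrix.mem_specialUnitaryGroup_iff.mpr ⟨Matrix.mem_unitaryGroup_iff.mpr hunit, hdet⟩
  · rw [hinv, hstar, hg, hu]
    ext i j
    rw [Matrix.mul_apply, Fin.sum_univ_two]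
    fin_cases i <;> fin_cases j <;> (try simp [Matrix.mul_apply, Fin.sum_univ_two]) <;>
      (try field_simp) <;>
      first
      | linear_combination (ρ * ρ + (a:ℂ) - 1) * hρ2 + hbb
      | linear_combination hbb + ((a:ℂ) - 1) * hρ2
      | linear_combination hρ2
      | ring

theorem su2GMap_contDiffOn : ContDiffOn ℝ (⊤ : ℕ∞) su2GMap su2U := by
  have hpos : ∀ u ∈ su2U, 0 < (u 0 0).re := by
    intro u hu
    rw [su2U_char] at hu
    obtain ⟨a, b, ha, -, -, rfl⟩ := hu
    simpa using ha
  have hentry : ∀ i j : Fin 2, ContDiff ℝ (⊤ : ℕ∞) (fun u : Matrix (Fin 2) (Fin 2) ℂ => u i j) :=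
    fun i j => (LinearMap.toContinuousLinearMap
      ((Matrix.entryLinearMap ℂ ℂ i j).restrictScalars ℝ)).contDiff
  have hre : ContDiff ℝ (⊤ : ℕ∞) (fun u : Matrix (Fin 2) (Fin 2) ℂ => (u 0 0).re) :=
    Complex.reCLM.contDiff.comp (hentry 0 0)
  have hsqrt : ContDiffOn ℝ (⊤ : ℕ∞) (fun u : Matrix (Fin 2) (Fin 2) ℂ => Real.sqrt (u 0 0).re) su2U :=
    fun u hu => ((Real.contDiffAt_sqrt (hpos u hu).ne').comp_contDiffWithinAt u
      (hre.contDiffAt.contDiffWithinAt))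
  have hρ : ContDiffOn ℝ (⊤ : ℕ∞)
      (fun u : Matrix (Fin 2) (Fin 2) ℂ => ((Real.sqrt (u 0 0).re : ℝ) : ℂ)) su2U :=
    Complex.ofRealCLM.contDiff.comp_contDiffOn hsqrt
  have hρne : ∀ u ∈ su2U, ((Real.sqrt (u 0 0).re : ℝ) : ℂ) ≠ 0 := by
    intro u hu
    have := Real.sqrt_pos.mpr (hpos u hu)
    exact_mod_cast this.ne'
  have hinv : ContDiffOn ℝ (⊤ : ℕ∞)
      (fun u : Matrix (Fin 2) (Fin 2) ℂ => (((Real.sqrt (u 0 0).re : ℝ) : ℂ))⁻¹) su2U :=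
    hρ.inv hρne
  have h01 : ContDiffOn ℝ (⊤ : ℕ∞)
      (fun u : Matrix (Fin 2) (Fin 2) ℂ =>
        -(u 0 1) / ((Real.sqrt (u 0 0).re : ℝ) : ℂ)) su2U := by
    simp only [div_eq_mul_inv]
    exact ((hentry 0 1).neg.contDiffOn).mul hinv
  have h10 : ContDiffOn ℝ (⊤ : ℕ∞)
      (fun u : Matrix (Fin 2) (Fin 2) ℂ =>
        (starRingEnd ℂ) (u 0 1) / ((Real.sqrt (u 0 0).re : ℝ) : ℂ)) su2U := by
    simp only [div_eq_mul_inv]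
    exact ((Complex.conjCLE.contDiff.comp (hentry 0 1)).contDiffOn).mul hinv
  apply contDiffOn_pi.2
  intro i
  apply contDiffOn_pi.2
  intro j
  fin_cases i <;> fin_cases j <;> simp only [su2GMap] <;>
    first
    | exact hρ
    | exact h01
    | exact h10

/-- **Lemma 2.** `𝒰` consists exactly of the matrices `[[a, b], [conj b, 1-a]]` with `a` real,
`0 < a ≤ 1`, `b ∈ ℂ` and `a² + |b|² = a`; for each such `u` the matrix `g_u` belongs to
`SU(2)` and satisfies `g_u · diag(1,0) · g_u⁻¹ = u`; and `u ↦ g_u` is smooth on `𝒰`. -/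
theorem su2U_section_smooth :
    (su2U = { u | ∃ (a : ℝ) (b : ℂ), 0 < a ∧ a ≤ 1 ∧ a ^ 2 + ‖b‖ ^ 2 = a ∧
        u = !![(a : ℂ), b; (starRingEnd ℂ) b, 1 - (a : ℂ)] }) ∧
    (∀ u ∈ su2U, su2GMap u ∈ Matrix.specialUnitaryGroup (Fin 2) ℂ ∧
        su2GMap u * !![1, 0; 0, 0] * (su2GMap u)⁻¹ = u) ∧
    ContDiffOn ℝ (⊤ : ℕ∞) su2GMap su2U := by
  refine ⟨su2U_char, ?_, su2GMap_contDiffOn⟩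
  intro u hu
  rw [su2U_char] at hu
  obtain ⟨a, b, ha, -, hab, hform⟩ := hu
  exact su2GMap_spec ha hab u hform
end
end

section
/- Let γ and δ be germs in C^∞_{n,SU(2)} such that γ(O) and δ(O) are regular. Let s_γ (resp. s_δ) denote the germ at O of the function x ↦ arccos(½ trace(γ(x))) (resp. x ↦ arccos(½ trace(δ(x)))), defined on a neighborhood of O where γ(x) (resp. δ(x)) is regular. Then γ and δ are conjugate in the group C^∞_{n,SU(2)} if and only if s_γ = s_δ as germs at O. -/
open scoped Manifold Topology
open Filter

noncomputable section

/-- The special unitary group `SU(2)`: 2×2 complex matrices `g` with `g⋆g = 1` and `det g = 1`. -/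
abbrev SU2 : Type := Matrix.specialUnitaryGroup (Fin 2) ℂ

noncomputable instance : Group SU2 :=
  { (inferInstance : Monoid SU2) with
    inv := fun g => ⟨star g.val, by
      rcases g with ⟨A, hA⟩
      rw [Matrix.mem_specialUnitaryGroup_iff] at hA ⊢
      refine ⟨Unitary.star_mem hA.1, ?_⟩
      rw [Matrix.star_eq_conjTranspose, Matrix.det_conjTranspose, hA.2, star_one]⟩
    inv_mul_cancel := fun g => Subtype.ext g.prop.1.1 }

/-- An element of `SU(2)` is regular if it is different from `id` and `-id`. -/
def SU2.IsRegular (g : SU2) : Prop :=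
  (g : Matrix (Fin 2) (Fin 2) ℂ) ≠ 1 ∧ (g : Matrix (Fin 2) (Fin 2) ℂ) ≠ -1

/-- The group `C^∞_{n,SU(2)}` of germs at the origin of `ℝⁿ` of smooth maps with values in
`SU(2)`, realized as a subgroup of the group of all germs at the origin of maps to `SU(2)`.
A map with values in `SU(2)` is smooth when all its matrix entries are smooth. -/
def su2Germs (n : ℕ) :
    Subgroup (Filter.Germ (𝓝 (0 : EuclideanSpace ℝ (Fin n))) SU2) where
  carrier := { γ | ∃ f : EuclideanSpace ℝ (Fin n) → SU2,
      (↑f : Filter.Germ (𝓝 (0 : EuclideanSpace ℝ (Fin n))) SU2) = γ ∧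
      ∀ᶠ x in 𝓝 (0 : EuclideanSpace ℝ (Fin n)), ∀ i j : Fin 2,
        ContDiffAt ℝ (⊤ : ℕ∞) (fun y => (f y : Matrix (Fin 2) (Fin 2) ℂ) i j) x }
  one_mem' := ⟨fun _ => 1, rfl, .of_forall fun _ _ _ => contDiffAt_const⟩
  mul_mem' := by
    rintro γ δ ⟨f, rfl, hf⟩ ⟨g, rfl, hg⟩
    refine ⟨f * g, rfl, (hf.and hg).mono fun x hx i j => ?_⟩
    have h : (fun y => ((f * g) y : Matrix (Fin 2) (Fin 2) ℂ) i j)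
        = fun y => ∑ k : Fin 2, (f y : Matrix (Fin 2) (Fin 2) ℂ) i k *
            (g y : Matrix (Fin 2) (Fin 2) ℂ) k j := by
      funext y; exact Matrix.mul_apply
    rw [h]
    exact ContDiffAt.sum fun k _ => (hx.1 i k).mul (hx.2 k j)
  inv_mem' := by
    rintro γ ⟨f, rfl, hf⟩
    refine ⟨f⁻¹, rfl, hf.mono fun x hx i j => ?_⟩
    have h : (fun y => ((f⁻¹) y : Matrix (Fin 2) (Fin 2) ℂ) i j)
        = fun y => (starRingEnd ℂ) ((f y : Matrix (Fin 2) (Fin 2) ℂ) j i) := by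
      funext y; rfl
    rw [h]
    exact Complex.conjCLE.contDiff.contDiffAt.comp x (hx j i)

/-- The evaluation homomorphism `ε : C^∞_{n,SU(2)} → SU(2)`, `γ ↦ γ(O)`. -/
def su2GermEval (n : ℕ) : ↥(su2Germs n) →* SU2 :=
  Filter.Germ.valueMulHom.comp (su2Germs n).subtype

end

/-- The eigenvalue-angle function `g ↦ arccos(½ trace g)` on `SU(2)`. -/
noncomputable def su2Angle (g : SU2) : ℝ :=
  Real.arccos (((g : Matrix (Fin 2) (Fin 2) ℂ).trace).re / 2)

open Complex

set_option linter.unreachableTactic false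
set_option linter.unusedTactic false
set_option linter.unusedVariables false

noncomputable section

-- basic structure lemmas
theorem SU2.star_eq_adjugate (g : SU2) :
    star (g.val) = Matrix.adjugate g.val := by
  have h1 : star g.val * g.val = 1 := g.prop.1.1
  have h2 : g.val * Matrix.adjugate g.val = 1 := by
    have hd : (g.val).det = 1 := g.prop.2
    rw [Matrix.mul_adjugate, hd, one_smul]
  calc star g.val = star g.val * (g.val * Matrix.adjugate g.val) := by rw [h2, mul_one]
    _ = (star g.val * g.val) * Matrix.adjugate g.val := by rw [mul_assoc]
    _ = Matrix.adjugate g.val := by rw [h1, one_mul]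

theorem SU2.entry11 (g : SU2) : g.val 1 1 = (starRingEnd ℂ) (g.val 0 0) := by
  have h := congrFun (congrFun (SU2.star_eq_adjugate g) 0) 0
  simp [Matrix.adjugate_fin_two, Matrix.star_eq_conjTranspose, Matrix.conjTranspose_apply] at h
  rw [← h]

theorem SU2.entry01 (g : SU2) : g.val 0 1 = -(starRingEnd ℂ) (g.val 1 0) := by
  have h := congrFun (congrFun (SU2.star_eq_adjugate g) 0) 1
  simp [Matrix.adjugate_fin_two, Matrix.star_eq_conjTranspose, Matrix.conjTranspose_apply] at h
  linear_combination h

theorem SU2.normSq_add (g : SU2) :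
    Complex.normSq (g.val 0 0) + Complex.normSq (g.val 1 0) = 1 := by
  have h1 : star g.val * g.val = 1 := g.prop.1.1
  have h := congrFun (congrFun h1 0) 0
  simp [Matrix.mul_apply, Fin.sum_univ_two, Matrix.star_eq_conjTranspose,
    Matrix.conjTranspose_apply, Matrix.one_apply] at h
  have h' : ((Complex.normSq (g.val 0 0) + Complex.normSq (g.val 1 0) : ℝ) : ℂ) = 1 := by
    push_cast
    rw [← Complex.normSq_eq_conj_mul_self, ← Complex.normSq_eq_conj_mul_self] at h
    exact_mod_cast h
  exact_mod_cast h'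


theorem SU2.abs_re_le (g : SU2) : (g.val 0 0).re ^ 2 ≤ 1 := by
  have h := SU2.normSq_add g
  have h1 : (g.val 0 0).re ^2 ≤ Complex.normSq (g.val 0 0) := by
    rw [Complex.normSq_apply]; nlinarith [sq_nonneg (g.val 0 0).im]
  nlinarith [Complex.normSq_nonneg (g.val 1 0)]

theorem SU2.re_sq_lt_of_regular {g : SU2} (hg : SU2.IsRegular g) :
    (g.val 0 0).re ^ 2 < 1 := by
  rcases lt_or_eq_of_le (SU2.abs_re_le g) with h | h
  · exact h
  · exfalso
    have hn := SU2.normSq_add g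
    have him : (g.val 0 0).im = 0 ∧ (g.val 1 0) = 0 := by
      constructor
      · nlinarith [Complex.normSq_nonneg (g.val 1 0), Complex.normSq_apply (g.val 0 0),
          sq_nonneg (g.val 0 0).im, Complex.normSq_apply (g.val 1 0),
          sq_nonneg (g.val 1 0).re, sq_nonneg (g.val 1 0).im]
      · rw [← Complex.normSq_eq_zero]
        nlinarith [Complex.normSq_apply (g.val 0 0), sq_nonneg (g.val 0 0).im,
          Complex.normSq_nonneg (g.val 1 0)]
    have hfac : ((g.val 0 0).re - 1) * ((g.val 0 0).re + 1) = 0 := by nlinarith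
    have ha : g.val 0 0 = 1 ∨ g.val 0 0 = -1 := by
      rcases mul_eq_zero.mp hfac with h' | h'
      · have h1 : (g.val 0 0).re = 1 := by linarith
        left; apply Complex.ext <;> simp [him.1, h1]
      · have h1 : (g.val 0 0).re = -1 := by linarith
        right; apply Complex.ext <;> simp [him.1, h1]
    have e01 := SU2.entry01 g
    have e11 := SU2.entry11 g
    rcases ha with ha | ha
    · apply hg.1
      ext i j
      fin_cases i <;> fin_cases j <;>
        simp [ha, him.2, e01, e11, Matrix.one_apply]
    · apply hg.2
      ext i j
      fin_cases i <;> fin_cases j <;>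
        simp [ha, him.2, e01, e11, Matrix.one_apply]


/-- Build an `SU(2)` element from a unit column. -/
def mkSU (p q : ℂ) (h : Complex.normSq p + Complex.normSq q = 1) : SU2 :=
  ⟨!![p, -(starRingEnd ℂ) q; q, (starRingEnd ℂ) p], by
    have hre : p.re^2 + p.im^2 + q.re^2 + q.im^2 = 1 := by
      have := h; simp [Complex.normSq_apply] at this; nlinarith [this]
    have hC : (starRingEnd ℂ) p * p + (starRingEnd ℂ) q * q = 1 := by
      rw [← Complex.normSq_eq_conj_mul_self, ← Complex.normSq_eq_conj_mul_self]
      exact_mod_cast h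
    rw [Matrix.mem_specialUnitaryGroup_iff]
    constructor
    · rw [Matrix.mem_unitaryGroup_iff]
      ext i j
      fin_cases i <;> fin_cases j <;>
        simp [Matrix.mul_apply, Fin.sum_univ_two, Matrix.star_eq_conjTranspose,
          Matrix.conjTranspose_apply, Matrix.one_apply, Complex.ext_iff,
          Complex.mul_re, Complex.mul_im] <;>
        constructor <;> first | linear_combination hre | nlinarith [hre] | ring
    · simp [Matrix.det_fin_two]
      first | linear_combination hC | linear_combination -hC⟩

@[simp] theorem mkSU_val (p q : ℂ) (h : Complex.normSq p + Complex.normSq q = 1) :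
    (mkSU p q h).val = !![p, -(starRingEnd ℂ) q; q, (starRingEnd ℂ) p] := rfl

theorem su2_inv_val (z : SU2) : (z⁻¹).val = star z.val := rfl

theorem su2Angle_conj (z g : SU2) : su2Angle (z * g * z⁻¹) = su2Angle g := by
  unfold su2Angle
  congr 2
  have hval : ((z * g * z⁻¹ : SU2) : Matrix (Fin 2) (Fin 2) ℂ)
      = z.val * g.val * star z.val := rfl
  rw [hval, Matrix.trace_mul_cycle, z.prop.1.1, one_mul]

theorem SU2.colC (g : SU2) :
    (starRingEnd ℂ) (g.val 0 0) * g.val 0 0 + (starRingEnd ℂ) (g.val 1 0) * g.val 1 0 = 1 := by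
  have h := SU2.normSq_add g
  rw [← Complex.normSq_eq_conj_mul_self, ← Complex.normSq_eq_conj_mul_self]
  exact_mod_cast h

/-- `diag (l, conj l)` as an element of `SU(2)` (junk value if `|l| ≠ 1`). -/
def DofC (l : ℂ) : SU2 :=
  if h : Complex.normSq l = 1 then mkSU l 0 (by simp [h]) else 1

theorem DofC_val (l : ℂ) (h : Complex.normSq l = 1) :
    (DofC l).val = !![l, 0; 0, (starRingEnd ℂ) l] := by
  rw [DofC, dif_pos h, mkSU_val]
  norm_num

-- scalar eigenvector identities
theorem eig0 (a b l : ℂ) (h1 : (starRingEnd ℂ) a * a + (starRingEnd ℂ) b * b = 1)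
    (h2 : l + (starRingEnd ℂ) l = a + (starRingEnd ℂ) a) (h3 : l * (starRingEnd ℂ) l = 1) :
    a * (a - (starRingEnd ℂ) l) + (-(starRingEnd ℂ) b) * b = l * (a - (starRingEnd ℂ) l) ∧
      b * (a - (starRingEnd ℂ) l) + (starRingEnd ℂ) a * b = l * b := by
  constructor
  · linear_combination (-a) * h2 + h3 - h1
  · linear_combination (-b) * h2

theorem eig1 (a b l : ℂ) (h1 : (starRingEnd ℂ) a * a + (starRingEnd ℂ) b * b = 1)
    (h2 : l + (starRingEnd ℂ) l = a + (starRingEnd ℂ) a) (h3 : l * (starRingEnd ℂ) l = 1) :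
    a * (-(starRingEnd ℂ) b) + (-(starRingEnd ℂ) b) * ((starRingEnd ℂ) a - (starRingEnd ℂ) l)
        = l * (-(starRingEnd ℂ) b) ∧
      b * (-(starRingEnd ℂ) b) + (starRingEnd ℂ) a * ((starRingEnd ℂ) a - (starRingEnd ℂ) l)
        = l * ((starRingEnd ℂ) a - (starRingEnd ℂ) l) := by
  constructor
  · linear_combination (starRingEnd ℂ) b * h2
  · linear_combination (-(starRingEnd ℂ) a) * h2 + h3 - h1

open scoped Topology

variable {n : ℕ}

local notation "E" => EuclideanSpace ℝ (Fin n)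

/-- Normalized column as an `SU(2)` element (junk value `1` if the column is zero). -/
def colSU (c₁ c₂ : ℂ) : SU2 :=
  if h : Complex.normSq c₁ + Complex.normSq c₂ = 0 then 1 else
    mkSU (c₁ / Real.sqrt (Complex.normSq c₁ + Complex.normSq c₂))
      (c₂ / Real.sqrt (Complex.normSq c₁ + Complex.normSq c₂)) (by
        have hpos : 0 < Complex.normSq c₁ + Complex.normSq c₂ :=
          lt_of_le_of_ne (add_nonneg (Complex.normSq_nonneg _) (Complex.normSq_nonneg _)) (Ne.symm h)
        have hs : (Real.sqrt (Complex.normSq c₁ + Complex.normSq c₂)) ^ 2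
            = Complex.normSq c₁ + Complex.normSq c₂ := Real.sq_sqrt hpos.le
        rw [Complex.normSq_div, Complex.normSq_div]
        rw [Complex.normSq_ofReal]
        rw [← sq, hs]
        field_simp)

theorem colSU_val (c₁ c₂ : ℂ) (h : Complex.normSq c₁ + Complex.normSq c₂ ≠ 0) :
    (colSU c₁ c₂).val =
      !![c₁ / Real.sqrt (Complex.normSq c₁ + Complex.normSq c₂),
          -(starRingEnd ℂ) (c₂ / Real.sqrt (Complex.normSq c₁ + Complex.normSq c₂));
        c₂ / Real.sqrt (Complex.normSq c₁ + Complex.normSq c₂),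
          (starRingEnd ℂ) (c₁ / Real.sqrt (Complex.normSq c₁ + Complex.normSq c₂))] := by
  rw [colSU, dif_neg h, mkSU_val]

theorem build_W (f : E → SU2) (lam u1 u2 : E → ℂ)
    (husm : ∀ᶠ x in 𝓝 (0 : E), ContDiffAt ℝ (⊤ : ℕ∞) u1 x ∧ ContDiffAt ℝ (⊤ : ℕ∞) u2 x)
    (heig : ∀ x, (f x).val 0 0 * u1 x + (f x).val 0 1 * u2 x = lam x * u1 x ∧
        (f x).val 1 0 * u1 x + (f x).val 1 1 * u2 x = lam x * u2 x)
    (hlam : ∀ x, Complex.normSq (lam x) = 1)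
    (h0 : ¬(u1 0 = 0 ∧ u2 0 = 0)) :
    ∃ W : E → SU2,
      (∀ᶠ x in 𝓝 (0 : E), ∀ i j : Fin 2, ContDiffAt ℝ (⊤ : ℕ∞) (fun y => (W y).val i j) x) ∧
      ∀ᶠ x in 𝓝 (0 : E), f x * W x = W x * DofC (lam x) := by
  classical
  set ns : E → ℝ := fun x => Complex.normSq (u1 x) + Complex.normSq (u2 x) with hns_def
  have hns_nonneg : ∀ x, 0 ≤ ns x := fun x =>
    add_nonneg (Complex.normSq_nonneg _) (Complex.normSq_nonneg _)
  have hns0 : 0 < ns 0 := by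
    rcases lt_or_eq_of_le (hns_nonneg 0) with h | h
    · exact h
    · exfalso
      apply h0
      have h' : Complex.normSq (u1 0) + Complex.normSq (u2 0) = 0 := h.symm
      constructor <;>
      · rw [← Complex.normSq_eq_zero]
        nlinarith [Complex.normSq_nonneg (u1 0), Complex.normSq_nonneg (u2 0)]
  -- eventually `ns > 0`
  have hu0 : ContDiffAt ℝ (⊤ : ℕ∞) u1 0 ∧ ContDiffAt ℝ (⊤ : ℕ∞) u2 0 := husm.self_of_nhds
  have hns_cont : ContinuousAt ns 0 := by
    exact ((Complex.continuous_normSq.continuousAt.comp hu0.1.continuousAt).add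
      (Complex.continuous_normSq.continuousAt.comp hu0.2.continuousAt))
  have hns_ev : ∀ᶠ x in 𝓝 (0 : E), 0 < ns x :=
    (continuousAt_const (y := (0:ℝ))).eventually_lt hns_cont hns0
  refine ⟨fun x => colSU (u1 x) (u2 x), ?_, ?_⟩
  · -- smoothness
    filter_upwards [husm, hns_ev] with x hu hns_pos
    intro i j
    -- basic smooth ingredients at x
    have hnsx : ContDiffAt ℝ (⊤ : ℕ∞) ns x := by
      have : ContDiffAt ℝ (⊤ : ℕ∞) (fun y => ((u1 y).re ^ 2 + (u1 y).im ^ 2)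
          + ((u2 y).re ^ 2 + (u2 y).im ^ 2)) x := by
        have r1 := (Complex.reCLM.contDiff.contDiffAt (x := u1 x)).comp x hu.1
        have i1 := (Complex.imCLM.contDiff.contDiffAt (x := u1 x)).comp x hu.1
        have r2 := (Complex.reCLM.contDiff.contDiffAt (x := u2 x)).comp x hu.2
        have i2 := (Complex.imCLM.contDiff.contDiffAt (x := u2 x)).comp x hu.2
        exact ((r1.pow 2).add (i1.pow 2)).add ((r2.pow 2).add (i2.pow 2))
      exact this.congr_of_eventuallyEq (Filter.Eventually.of_forall fun y => by
        simp [hns_def, Complex.normSq_apply, sq])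
    have hnsx_cont : ContinuousAt ns x := hnsx.continuousAt
    have hnear : ∀ᶠ y in 𝓝 x, 0 < ns y :=
      (continuousAt_const (y := (0:ℝ))).eventually_lt hnsx_cont hns_pos
    have hsqrtC : ContDiffAt ℝ (⊤ : ℕ∞) (fun y => ((Real.sqrt (ns y) : ℝ) : ℂ)) x :=
      (Complex.ofRealCLM.contDiff.contDiffAt).comp x
        ((Real.contDiffAt_sqrt (ne_of_gt hns_pos)).comp x hnsx)
    have hsqrt_ne : ((Real.sqrt (ns x) : ℝ) : ℂ) ≠ 0 := by
      simp only [ne_eq, Complex.ofReal_eq_zero]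
      positivity
    have hinv : ContDiffAt ℝ (⊤ : ℕ∞) (fun y => (((Real.sqrt (ns y) : ℝ) : ℂ))⁻¹) x :=
      hsqrtC.inv hsqrt_ne
    have hd1 : ContDiffAt ℝ (⊤ : ℕ∞) (fun y => u1 y / ((Real.sqrt (ns y) : ℝ) : ℂ)) x := by
      refine (hu.1.mul hinv).congr_of_eventuallyEq
        (Filter.Eventually.of_forall fun y => div_eq_mul_inv _ _)
    have hd2 : ContDiffAt ℝ (⊤ : ℕ∞) (fun y => u2 y / ((Real.sqrt (ns y) : ℝ) : ℂ)) x := by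
      refine (hu.2.mul hinv).congr_of_eventuallyEq
        (Filter.Eventually.of_forall fun y => div_eq_mul_inv _ _)
    have hval : ∀ᶠ y in 𝓝 x, (colSU (u1 y) (u2 y)).val =
        !![u1 y / Real.sqrt (ns y), -(starRingEnd ℂ) (u2 y / Real.sqrt (ns y));
           u2 y / Real.sqrt (ns y), (starRingEnd ℂ) (u1 y / Real.sqrt (ns y))] := by
      filter_upwards [hnear] with y hy
      exact colSU_val _ _ (ne_of_gt hy)
    fin_cases i <;> fin_cases j
    · exact hd1.congr_of_eventuallyEq (hval.mono fun y hy => by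
        simp only [hy]; simp)
    · exact ((Complex.conjCLE.contDiff.contDiffAt.comp x hd2).neg).congr_of_eventuallyEq
        (hval.mono fun y hy => by
          simp only [hy]; simp [Complex.conjCLE_apply])
    · exact hd2.congr_of_eventuallyEq (hval.mono fun y hy => by
        simp only [hy]; simp)
    · exact (Complex.conjCLE.contDiff.contDiffAt.comp x hd1).congr_of_eventuallyEq
        (hval.mono fun y hy => by
          simp only [hy]; simp [Complex.conjCLE_apply])
  · -- the conjugation equation
    filter_upwards [hns_ev] with x hx
    apply Subtype.ext
    have hWval := colSU_val (u1 x) (u2 x) (ne_of_gt hx)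
    have hmul1 : ((f x * colSU (u1 x) (u2 x) : SU2) : Matrix (Fin 2) (Fin 2) ℂ)
        = (f x).val * (colSU (u1 x) (u2 x)).val := rfl
    have hmul2 : ((colSU (u1 x) (u2 x) * DofC (lam x) : SU2) : Matrix (Fin 2) (Fin 2) ℂ)
        = (colSU (u1 x) (u2 x)).val * (DofC (lam x)).val := rfl
    rw [hmul1, hmul2, hWval, DofC_val _ (hlam x)]
    obtain ⟨k1, k2⟩ := heig x
    have e01 := SU2.entry01 (f x)
    have e11 := SU2.entry11 (f x)
    rw [e01] at k1
    rw [e11] at k2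
    have c1 := congrArg (starRingEnd ℂ) k1
    have c2 := congrArg (starRingEnd ℂ) k2
    simp only [map_add, map_mul, map_neg, Complex.conj_conj] at c1 c2
    set s : ℝ := Real.sqrt (ns x) with hs_def
    rw [Matrix.eta_fin_two (f x).val, e01, e11]
    refine Matrix.ext fun i j => ?_
    fin_cases i <;> fin_cases j <;>
      simp [Matrix.mul_apply, Fin.sum_univ_two, map_div₀, Complex.conj_ofReal] <;>
      first
        | linear_combination k1 / (s : ℂ)
        | linear_combination k2 / (s : ℂ)
        | linear_combination c1 / (s : ℂ)
        | linear_combination (-1 : ℂ)/(s:ℂ) * c2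
        | linear_combination (1 : ℂ)/(s:ℂ) * c2
        | linear_combination (-1 : ℂ)/(s:ℂ) * c1
        | linear_combination -k1 / (s : ℂ)
        | linear_combination -k2 / (s : ℂ)

/-- The eigenvalue function. -/
def lamF (f : E → SU2) : E → ℂ := fun x =>
  Complex.mk (((f x).val 0 0).re) (Real.sqrt (1 - ((f x).val 0 0).re ^ 2))

theorem lamF_normSq (f : E → SU2) (x : E) : Complex.normSq (lamF f x) = 1 := by
  have h := SU2.abs_re_le (f x)
  simp only [lamF, Complex.normSq_mk]
  rw [Real.mul_self_sqrt (by nlinarith)]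
  nlinarith

theorem lamF_add_conj (f : E → SU2) (x : E) :
    lamF f x + (starRingEnd ℂ) (lamF f x) = (f x).val 0 0 + (starRingEnd ℂ) ((f x).val 0 0) := by
  rw [Complex.add_conj, Complex.add_conj]
  norm_num [lamF]

theorem lamF_mul_conj (f : E → SU2) (x : E) :
    lamF f x * (starRingEnd ℂ) (lamF f x) = 1 := by
  rw [Complex.mul_conj, lamF_normSq]
  norm_num

theorem diagonalize (f : E → SU2)
    (hsm : ∀ᶠ x in 𝓝 (0 : E), ∀ i j : Fin 2, ContDiffAt ℝ (⊤ : ℕ∞) (fun y => (f y).val i j) x)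
    (hreg : SU2.IsRegular (f 0)) :
    ∃ W : E → SU2,
      (∀ᶠ x in 𝓝 (0 : E), ∀ i j : Fin 2, ContDiffAt ℝ (⊤ : ℕ∞) (fun y => (W y).val i j) x) ∧
      ∀ᶠ x in 𝓝 (0 : E), f x * W x = W x * DofC (lamF f x) := by
  classical
  set r : E → ℝ := fun x => ((f x).val 0 0).re with hr_def
  have hr0 : r 0 ^ 2 < 1 := SU2.re_sq_lt_of_regular hreg
  -- eventual smoothness of `lamF f`
  have hsm0 := hsm.self_of_nhds
  have hrcont : ContinuousAt r 0 :=
    (Complex.reCLM.continuous.continuousAt).comp (hsm0 0 0).continuousAt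
  have hev : ∀ᶠ x in 𝓝 (0 : E), 0 < 1 - r x ^ 2 := by
    have : ContinuousAt (fun x => 1 - r x ^ 2) 0 := by
      exact (continuousAt_const.sub ((hrcont.pow 2)))
    exact (continuousAt_const (y := (0:ℝ))).eventually_lt this (by linarith)
  have hlam_sm : ∀ᶠ x in 𝓝 (0 : E), ContDiffAt ℝ (⊤ : ℕ∞) (lamF f) x := by
    filter_upwards [hsm, hev] with x hx hpos
    have hrx : ContDiffAt ℝ (⊤ : ℕ∞) r x :=
      (Complex.reCLM.contDiff.contDiffAt).comp x (hx 0 0)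
    have htx : ContDiffAt ℝ (⊤ : ℕ∞) (fun y => Real.sqrt (1 - r y ^ 2)) x :=
      (Real.contDiffAt_sqrt (ne_of_gt hpos)).comp x (contDiffAt_const.sub (hrx.pow 2))
    have : ContDiffAt ℝ (⊤ : ℕ∞) (fun y => ((r y : ℝ) : ℂ)
        + ((Real.sqrt (1 - r y ^ 2) : ℝ) : ℂ) * Complex.I) x := by
      exact ((Complex.ofRealCLM.contDiff.contDiffAt).comp x hrx).add
        (((Complex.ofRealCLM.contDiff.contDiffAt).comp x htx).mul contDiffAt_const)
    refine this.congr_of_eventuallyEq (Filter.Eventually.of_forall fun y => ?_)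
    simp [lamF, Complex.mk_eq_add_mul_I, hr_def]
  -- the two candidate eigenvector columns
  by_cases hc : (f 0).val 0 0 - (starRingEnd ℂ) (lamF f 0) = 0 ∧ (f 0).val 1 0 = 0
  · -- use the second column
    refine build_W f (lamF f) (fun x => -(starRingEnd ℂ) ((f x).val 1 0))
      (fun x => (starRingEnd ℂ) ((f x).val 0 0) - (starRingEnd ℂ) (lamF f x)) ?_ ?_ (lamF_normSq f) ?_
    · filter_upwards [hsm, hlam_sm] with x hx hl
      constructor
      · exact ((Complex.conjCLE.contDiff.contDiffAt).comp x (hx 1 0)).neg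
      · exact ((Complex.conjCLE.contDiff.contDiffAt).comp x (hx 0 0)).sub
          ((Complex.conjCLE.contDiff.contDiffAt).comp x hl)
    · intro x
      rw [SU2.entry01 (f x), SU2.entry11 (f x)]
      exact eig1 _ _ _ (SU2.colC (f x)) (lamF_add_conj f x) (lamF_mul_conj f x)
    · rintro ⟨h1, h2⟩
      -- then `a 0 = lamF 0` and `a 0 = conj (lamF 0)`, so `lamF 0` is real, contradiction
      have ha1 : (f 0).val 0 0 = (starRingEnd ℂ) (lamF f 0) := by
        have := hc.1; linear_combination this
      have ha2 : (f 0).val 0 0 = lamF f 0 := by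
        have h2' : (starRingEnd ℂ) ((f 0).val 0 0) = (starRingEnd ℂ) (lamF f 0) := by
          linear_combination h2
        exact (starRingEnd ℂ).injective h2'
      have him : (lamF f 0).im = 0 := by
        have heq : (starRingEnd ℂ) (lamF f 0) = lamF f 0 := ha1.symm.trans ha2
        have := congrArg Complex.im heq
        simp only [Complex.conj_im] at this
        linarith
      have : Real.sqrt (1 - r 0 ^ 2) = 0 := him
      have hle := Real.sqrt_eq_zero'.mp this
      nlinarith
  · refine build_W f (lamF f) (fun x => (f x).val 0 0 - (starRingEnd ℂ) (lamF f x))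
      (fun x => (f x).val 1 0) ?_ ?_ (lamF_normSq f) ?_
    · filter_upwards [hsm, hlam_sm] with x hx hl
      exact ⟨(hx 0 0).sub ((Complex.conjCLE.contDiff.contDiffAt).comp x hl), hx 1 0⟩
    · intro x
      rw [SU2.entry01 (f x), SU2.entry11 (f x)]
      exact eig0 _ _ _ (SU2.colC (f x)) (lamF_add_conj f x) (lamF_mul_conj f x)
    · exact hc

theorem su2Angle_eq (g : SU2) : su2Angle g = Real.arccos ((g.val 0 0).re) := by
  unfold su2Angle
  rw [Matrix.trace_fin_two, SU2.entry11]
  congr 1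
  simp [Complex.add_re, Complex.conj_re]


end


/-- **Lemma 4.** Two germs `γ, δ ∈ C^∞_{n,SU(2)}` whose values at the origin are regular are
conjugate in `C^∞_{n,SU(2)}` if and only if the associated angle germs
`s_γ = arccos(½ trace γ(·))` and `s_δ` at the origin coincide. -/
theorem su2_germs_conjugate_iff_angle_germ_eq (n : ℕ) (hn : 1 ≤ n)
    (γ δ : ↥(su2Germs n))
    (hγ : SU2.IsRegular (su2GermEval n γ)) (hδ : SU2.IsRegular (su2GermEval n δ)) :
    (∃ ζ : ↥(su2Germs n), ζ * γ * ζ⁻¹ = δ) ↔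
      (γ : Filter.Germ (𝓝 (0 : EuclideanSpace ℝ (Fin n))) SU2).map su2Angle
        = (δ : Filter.Germ (𝓝 (0 : EuclideanSpace ℝ (Fin n))) SU2).map su2Angle := by
  constructor
  · rintro ⟨ζ, hζ⟩
    obtain ⟨z, hz, -⟩ := ζ.2
    obtain ⟨fa, hfa, -⟩ := γ.2
    have hval : (ζ : Filter.Germ (𝓝 (0 : EuclideanSpace ℝ (Fin n))) SU2) * γ * (ζ : Filter.Germ (𝓝 (0 : EuclideanSpace ℝ (Fin n))) SU2)⁻¹
        = (δ : Filter.Germ (𝓝 (0 : EuclideanSpace ℝ (Fin n))) SU2) := by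
      have := congrArg Subtype.val hζ
      simpa using this
    have h1 : (δ : Filter.Germ (𝓝 (0 : EuclideanSpace ℝ (Fin n))) SU2)
        = ↑(fun x => z x * fa x * (z x)⁻¹) := by
      rw [← hval, ← hfa, ← hz, ← Filter.Germ.coe_inv, ← Filter.Germ.coe_mul,
        ← Filter.Germ.coe_mul]
      rfl
    rw [h1, ← hfa, Filter.Germ.map_coe, Filter.Germ.map_coe]
    congr 1
    funext x
    exact (su2Angle_conj (z x) (fa x)).symm
  · intro hangle
    obtain ⟨fa, hfa, hfs⟩ := γ.2
    obtain ⟨ga, hga, hgs⟩ := δ.2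
    have hregf : SU2.IsRegular (fa 0) := by
      have e : su2GermEval n γ = Filter.Germ.value (γ : Filter.Germ (𝓝 (0 : EuclideanSpace ℝ (Fin n))) SU2) := rfl
      rw [e, ← hfa] at hγ
      exact hγ
    have hregg : SU2.IsRegular (ga 0) := by
      have e : su2GermEval n δ = Filter.Germ.value (δ : Filter.Germ (𝓝 (0 : EuclideanSpace ℝ (Fin n))) SU2) := rfl
      rw [e, ← hga] at hδ
      exact hδ
    -- equality of the `re` of top-left entries
    have hr : ∀ᶠ x in 𝓝 (0 : EuclideanSpace ℝ (Fin n)), ((fa x).val 0 0).re = ((ga x).val 0 0).re := by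
      rw [← hfa, ← hga, Filter.Germ.map_coe, Filter.Germ.map_coe] at hangle
      have := Filter.Germ.coe_eq.mp hangle
      filter_upwards [this] with x hx
      have h1 := SU2.abs_re_le (fa x)
      have h2 := SU2.abs_re_le (ga x)
      have m1 : ((fa x).val 0 0).re ∈ Set.Icc (-1:ℝ) 1 := by
        constructor <;> nlinarith
      have m2 : ((ga x).val 0 0).re ∈ Set.Icc (-1:ℝ) 1 := by
        constructor <;> nlinarith
      apply Real.arccos_injOn m1 m2
      have hx' : su2Angle (fa x) = su2Angle (ga x) := hx
      rw [su2Angle_eq, su2Angle_eq] at hx'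
      exact hx'
    have hDeq : ∀ᶠ x in 𝓝 (0 : EuclideanSpace ℝ (Fin n)), DofC (lamF fa x) = DofC (lamF ga x) := by
      filter_upwards [hr] with x hx
      congr 1
      simp only [lamF, hx]
    obtain ⟨Wf, hWfs, hWfe⟩ := diagonalize fa hfs hregf
    obtain ⟨Wg, hWgs, hWge⟩ := diagonalize ga hgs hregg
    set Wfg : ↥(su2Germs n) := ⟨↑Wf, ⟨Wf, rfl, hWfs⟩⟩ with hWfg
    set Wgg : ↥(su2Germs n) := ⟨↑Wg, ⟨Wg, rfl, hWgs⟩⟩ with hWgg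
    refine ⟨Wgg * Wfg⁻¹, ?_⟩
    apply Subtype.ext
    have hF : (↑fa : Filter.Germ (𝓝 (0 : EuclideanSpace ℝ (Fin n))) SU2) * ↑Wf
        = ↑Wf * ↑(fun x => DofC (lamF fa x)) := by
      rw [← Filter.Germ.coe_mul, ← Filter.Germ.coe_mul]
      exact Filter.Germ.coe_eq.mpr hWfe
    have hG : (↑ga : Filter.Germ (𝓝 (0 : EuclideanSpace ℝ (Fin n))) SU2) * ↑Wg
        = ↑Wg * ↑(fun x => DofC (lamF ga x)) := by
      rw [← Filter.Germ.coe_mul, ← Filter.Germ.coe_mul]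
      exact Filter.Germ.coe_eq.mpr hWge
    have hD : (↑(fun x => DofC (lamF fa x)) : Filter.Germ (𝓝 (0 : EuclideanSpace ℝ (Fin n))) SU2)
        = ↑(fun x => DofC (lamF ga x)) := Filter.Germ.coe_eq.mpr hDeq
    have hF' : (↑fa : Filter.Germ (𝓝 (0 : EuclideanSpace ℝ (Fin n))) SU2)
        = ↑Wf * ↑(fun x => DofC (lamF fa x)) * (↑Wf)⁻¹ := by
      rw [← hF]; group
    have hG' : (↑ga : Filter.Germ (𝓝 (0 : EuclideanSpace ℝ (Fin n))) SU2)
        = ↑Wg * ↑(fun x => DofC (lamF ga x)) * (↑Wg)⁻¹ := by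
      rw [← hG]; group
    show ((Wgg * Wfg⁻¹ * γ * (Wgg * Wfg⁻¹)⁻¹ : ↥(su2Germs n)) : Filter.Germ (𝓝 (0 : EuclideanSpace ℝ (Fin n))) SU2)
        = (δ : Filter.Germ (𝓝 (0 : EuclideanSpace ℝ (Fin n))) SU2)
    simp only [Subgroup.coe_mul, Subgroup.coe_inv, hWfg, hWgg]
    rw [← hfa, ← hga, hF', hG', ← hD]
    group
end

section
/- Let 𝒪 be a neighborhood of the origin in ℝ^n and let s, t : 𝒪 → (0,π) be smooth maps with sin(t(x)/2) < sin(s(x)) for all x ∈ 𝒪. Define smooth maps ζ, η, δ : 𝒪 → SU(2) by: ζ(x) is the real rotation matrix [[c(x), r(x)],[−r(x), c(x)]] with r(x) = sin(t(x)/2)/sin(s(x)) and c(x) = (1 − r(x)²)^{1/2}; η(x) = D(s(x)) ζ(x) D(s(x))^{-1} ζ(x)^{-1} where D(s) = diag(e^{is}, e^{-is}); and δ(x) = D(t(x)). Then η(x) is regular (η(x) ∉ {id, −id}) for all x ∈ 𝒪, trace(η(x)) = 2 cos(t(x)) = trace(δ(x)) for all x ∈ 𝒪, and the germs at O of η and δ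 are conjugate in C^∞_{n,SU(2)}. -/
open scoped Manifold Topology
open Filter

noncomputable section

/-- The diagonal matrix `D(s) = diag(e^{is}, e^{-is})`. -/
def su2Diag (s : ℝ) : Matrix (Fin 2) (Fin 2) ℂ :=
  !![Complex.exp (s * Complex.I), 0; 0, Complex.exp (-(s * Complex.I))]

/-- The rotation matrix `ζ = [[c, r], [-r, c]]` with `r = sin(t/2)/sin(s)` and
`c = (1 - r²)^{1/2}`. -/
def su2Rot (r : ℝ) : Matrix (Fin 2) (Fin 2) ℂ :=
  !![(Real.sqrt (1 - r ^ 2) : ℂ), (r : ℂ); -(r : ℂ), (Real.sqrt (1 - r ^ 2) : ℂ)]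


open Complex Matrix ComplexConjugate in
lemma fin_two_ext' {a b c d e f g h : ℂ}
    (h1 : a = e) (h2 : b = f) (h3 : c = g) (h4 : d = h) :
    !![a, b; c, d] = !![e, f; g, h] := by
  rw [h1, h2, h3, h4]

open Complex Matrix ComplexConjugate in
lemma star_fin_two' (a b c d : ℂ) :
    star !![a, b; c, d] = !![conj a, conj c; conj b, conj d] := by
  ext i j
  fin_cases i <;> fin_cases j <;>
    simp [Matrix.star_eq_conjTranspose, Matrix.conjTranspose_apply]

open Complex Matrix ComplexConjugate in
lemma smul_fin_two' (x a b c d : ℂ) :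
    x • !![a, b; c, d] = !![x * a, x * b; x * c, x * d] := by
  ext i j
  fin_cases i <;> fin_cases j <;> simp

open Complex Matrix ComplexConjugate in
lemma exp_mul_exp_neg' (S : ℝ) :
    Complex.exp ((S : ℂ) * I) * Complex.exp (-((S : ℂ) * I)) = 1 := by
  rw [← Complex.exp_add]; simp

open Complex Matrix ComplexConjugate in
lemma conj_exp_I' (S : ℝ) :
    conj (Complex.exp ((S : ℂ) * I)) = Complex.exp (-((S : ℂ) * I)) := by
  rw [← Complex.exp_conj]; congr 1; simp [Complex.conj_I]

open Complex Matrix ComplexConjugate in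
lemma two_cos' (T : ℝ) :
    Complex.exp ((T : ℂ) * I) + Complex.exp (-((T : ℂ) * I)) = ((2 * Real.cos T : ℝ) : ℂ) := by
  push_cast [Complex.ofReal_cos]
  rw [Complex.cos]
  ring_nf

open Complex Matrix ComplexConjugate in
lemma exp_sq' (S : ℝ) : Complex.exp ((S : ℂ) * I) ^ 2 = Complex.exp (((2 * S : ℝ) : ℂ) * I) := by
  rw [sq, ← Complex.exp_add]
  congr 1
  push_cast
  ring

open Complex Matrix ComplexConjugate in
lemma exp_neg_sq' (S : ℝ) :
    Complex.exp (-((S : ℂ) * I)) ^ 2 = Complex.exp (-(((2 * S : ℝ) : ℂ) * I)) := by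
  rw [sq, ← Complex.exp_add]
  congr 1
  push_cast
  ring

open Complex Matrix ComplexConjugate in
lemma exp_sq_ne_one' (S : ℝ) (hS : S ∈ Set.Ioo 0 Real.pi) :
    Complex.exp ((S : ℂ) * I) ^ 2 ≠ 1 := by
  rw [exp_sq']
  intro h
  rw [Complex.exp_eq_one_iff] at h
  obtain ⟨n, hn⟩ := h
  have h2 : ((2 * S : ℝ) : ℂ) = (n : ℂ) * (2 * Real.pi) :=
    mul_right_cancel₀ Complex.I_ne_zero (by rw [hn]; ring)
  have h3 : (2 * S : ℝ) = (n : ℝ) * (2 * Real.pi) := by exact_mod_cast h2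
  have hπ := Real.pi_pos
  have hn0 : 0 < (n : ℝ) := by nlinarith [hS.1]
  have hn0' : 0 < n := by exact_mod_cast hn0
  have : (1 : ℝ) ≤ (n : ℝ) := by exact_mod_cast hn0'
  nlinarith [hS.2]

open Complex Matrix ComplexConjugate in
lemma sqrtsq' (R : ℝ) (hR : R ^ 2 ≤ 1) :
    ((Real.sqrt (1 - R ^ 2) : ℝ) : ℂ) ^ 2 = 1 - (R : ℂ) ^ 2 := by
  rw [← Complex.ofReal_pow, Real.sq_sqrt (by linarith : (0:ℝ) ≤ 1 - R ^ 2)]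
  push_cast
  ring

/-- upper-left entry of the commutator matrix -/
def afR (S R : ℝ) : ℂ :=
  ((Real.sqrt (1 - R ^ 2) : ℝ) : ℂ) ^ 2 + (R : ℂ) ^ 2 * Complex.exp ((S : ℂ) * Complex.I) ^ 2

/-- upper-right entry of the commutator matrix -/
def bfR (S R : ℝ) : ℂ :=
  ((Real.sqrt (1 - R ^ 2) : ℝ) : ℂ) * (R : ℂ) * (Complex.exp ((S : ℂ) * Complex.I) ^ 2 - 1)

/-- the eigenvalue `e^{iT}` -/
def lfT (T : ℝ) : ℂ := Complex.exp ((T : ℂ) * Complex.I)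

/-- normalizing factor -/
def nuR (S R T : ℝ) : ℝ :=
  Real.sqrt (Complex.normSq (bfR S R) + Complex.normSq (lfT T - afR S R))

open Complex Matrix ComplexConjugate in
/-- conjugating matrix -/
def PfR (S R T : ℝ) : Matrix (Fin 2) (Fin 2) ℂ :=
  ((nuR S R T : ℝ) : ℂ)⁻¹ •
    !![bfR S R, -(conj (lfT T) - conj (afR S R)); lfT T - afR S R, conj (bfR S R)]

open Complex Matrix ComplexConjugate in
lemma conj_afR' (S R : ℝ) :
    conj (afR S R) =
      ((Real.sqrt (1 - R ^ 2) : ℝ) : ℂ) ^ 2 + (R : ℂ) ^ 2 * Complex.exp (-((S : ℂ) * I)) ^ 2 := by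
  rw [afR]
  simp only [map_add, _root_.map_mul, map_pow, conj_exp_I', Complex.conj_ofReal]

open Complex Matrix ComplexConjugate in
lemma conj_bfR' (S R : ℝ) :
    conj (bfR S R) =
      ((Real.sqrt (1 - R ^ 2) : ℝ) : ℂ) * (R : ℂ) * (Complex.exp (-((S : ℂ) * I)) ^ 2 - 1) := by
  rw [bfR]
  simp only [_root_.map_mul, map_sub, map_pow, _root_.map_one, conj_exp_I', Complex.conj_ofReal]

open Complex Matrix ComplexConjugate in
lemma su2Diag_inv' (S : ℝ) :
    (su2Diag S)⁻¹ = !![Complex.exp (-((S : ℂ) * I)), 0; 0, Complex.exp ((S : ℂ) * I)] := by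
  apply Matrix.inv_eq_right_inv
  rw [su2Diag, Matrix.mul_fin_two, Matrix.one_fin_two]
  exact fin_two_ext' (by rw [← Complex.exp_add]; simp) (by ring) (by ring)
    (by rw [← Complex.exp_add]; simp)

open Complex Matrix ComplexConjugate in
lemma su2Rot_inv' (R : ℝ) (hR : R ^ 2 ≤ 1) :
    (su2Rot R)⁻¹ =
      !![(Real.sqrt (1 - R ^ 2) : ℂ), -(R : ℂ); (R : ℂ), (Real.sqrt (1 - R ^ 2) : ℂ)] := by
  apply Matrix.inv_eq_right_inv
  rw [su2Rot, Matrix.mul_fin_two, Matrix.one_fin_two]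
  have h := sqrtsq' R hR
  exact fin_two_ext' (by linear_combination h) (by ring) (by ring) (by linear_combination h)

open Complex Matrix ComplexConjugate in
lemma eta_eq' (S R : ℝ) (hR : R ^ 2 ≤ 1) :
    su2Diag S * su2Rot R * (su2Diag S)⁻¹ * (su2Rot R)⁻¹ =
      !![afR S R, bfR S R; -conj (bfR S R), conj (afR S R)] := by
  rw [su2Diag_inv', su2Rot_inv' R hR, su2Diag, su2Rot, conj_afR', conj_bfR', afR, bfR]
  rw [Matrix.mul_fin_two, Matrix.mul_fin_two, Matrix.mul_fin_two]
  set C := ((Real.sqrt (1 - R ^ 2) : ℝ) : ℂ) with hC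
  set u := Complex.exp ((S : ℂ) * I) with hu1
  set u' := Complex.exp (-((S : ℂ) * I)) with hu2
  have hu : u * u' = 1 := exp_mul_exp_neg' S
  exact fin_two_ext' (by linear_combination C ^ 2 * hu)
    (by linear_combination (-(C * (R : ℂ))) * hu)
    (by linear_combination C * (R : ℂ) * hu)
    (by linear_combination C ^ 2 * hu)

open Complex Matrix ComplexConjugate in
lemma su2_core' (a b l ν : ℂ)
    (h1 : a * conj a + b * conj b = 1)
    (h2 : l * conj l = 1)
    (h3 : l + conj l = a + conj a)
    (hν : ν ≠ 0) (hνr : conj ν = ν)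
    (hν2 : ν ^ 2 = b * conj b + (l - a) * conj (l - a)) :
    !![a, b; -conj b, conj a] ∈ Matrix.specialUnitaryGroup (Fin 2) ℂ ∧
    (ν⁻¹ • !![b, -(conj l - conj a); l - a, conj b] ∈
      Matrix.specialUnitaryGroup (Fin 2) ℂ) ∧
    !![a, b; -conj b, conj a] * (ν⁻¹ • !![b, -(conj l - conj a); l - a, conj b]) =
      (ν⁻¹ • !![b, -(conj l - conj a); l - a, conj b]) * !![l, 0; 0, conj l] := by
  rw [map_sub] at hν2
  set a' := conj a with ha'
  set b' := conj b with hb'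
  set l' := conj l with hl'
  have hstarA : star !![a, b; -b', a'] = !![a', -b; b', a] := by
    rw [star_fin_two']
    exact fin_two_ext' rfl (by simp [hb']) (by simp [ha', hb', hl']) (by simp [ha'])
  have hstarP : star !![b, -(l' - a'); l - a, b'] = !![b', l' - a'; -(l - a), b] := by
    rw [star_fin_two']
    exact fin_two_ext' rfl (by simp [ha', hb', hl']) (by simp [ha', hb', hl'])
      (by simp [hb'])
  refine ⟨?_, ?_, ?_⟩
  · rw [Matrix.mem_specialUnitaryGroup_iff, Matrix.mem_unitaryGroup_iff, hstarA,
      Matrix.mul_fin_two, Matrix.det_fin_two_of, Matrix.one_fin_two]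
    exact ⟨fin_two_ext' (by linear_combination h1) (by ring) (by ring)
        (by linear_combination h1), by linear_combination h1⟩
  · rw [Matrix.mem_specialUnitaryGroup_iff, Matrix.mem_unitaryGroup_iff]
    have hdet : (ν⁻¹ • !![b, -(l' - a'); l - a, b']).det = 1 := by
      rw [Matrix.det_smul, Matrix.det_fin_two_of, Fintype.card_fin]
      field_simp
      linear_combination -hν2
    refine ⟨?_, hdet⟩
    rw [star_smul, hstarP, Matrix.smul_mul, Matrix.mul_smul, smul_smul]
    have hsν : star ν⁻¹ = ν⁻¹ := by
      rw [star_inv₀]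
      exact congrArg Inv.inv hνr
    rw [hsν, Matrix.mul_fin_two, Matrix.one_fin_two]
    have key : !![b * b' + -(l' - a') * -(l - a), b * (l' - a') + -(l' - a') * b;
        (l - a) * b' + b' * -(l - a), (l - a) * (l' - a') + b' * b] =
        !![ν ^ 2, 0; 0, ν ^ 2] :=
      fin_two_ext' (by linear_combination -hν2) (by ring) (by ring)
        (by linear_combination -hν2)
    rw [key, smul_fin_two']
    exact fin_two_ext' (by field_simp) (by ring) (by ring) (by field_simp)
  · rw [Matrix.mul_smul, Matrix.smul_mul]
    congr 1
    rw [Matrix.mul_fin_two, Matrix.mul_fin_two]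
    exact fin_two_ext' (by ring) (by linear_combination h1 - h2 + l' * h3)
      (by linear_combination -h1 + h2 - l * h3) (by ring)

open Complex Matrix ComplexConjugate in
lemma pointwise' (S T R : ℝ) (hS : S ∈ Set.Ioo 0 Real.pi) (hT : T ∈ Set.Ioo 0 Real.pi)
    (hlt : Real.sin (T / 2) < Real.sin S) (hR : R = Real.sin (T / 2) / Real.sin S) :
    0 < R ∧ R < 1 ∧
    afR S R * conj (afR S R) + bfR S R * conj (bfR S R) = 1 ∧
    lfT T * conj (lfT T) = 1 ∧
    afR S R + conj (afR S R) = ((2 * Real.cos T : ℝ) : ℂ) ∧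
    lfT T + conj (lfT T) = afR S R + conj (afR S R) ∧
    bfR S R ≠ 0 := by
  have hπ := Real.pi_pos
  have hsinS : 0 < Real.sin S := Real.sin_pos_of_pos_of_lt_pi hS.1 hS.2
  have hsinT2 : 0 < Real.sin (T / 2) :=
    Real.sin_pos_of_pos_of_lt_pi (by linarith [hT.1]) (by linarith [hT.2])
  have hR0 : 0 < R := hR ▸ div_pos hsinT2 hsinS
  have hR1 : R < 1 := by rw [hR, div_lt_one hsinS]; exact hlt
  have hR2 : R ^ 2 ≤ 1 := by nlinarith
  have hRs : R * Real.sin S = Real.sin (T / 2) := by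
    rw [hR]; field_simp
  have hsq := sqrtsq' R hR2
  have hu := exp_mul_exp_neg' S
  set C := ((Real.sqrt (1 - R ^ 2) : ℝ) : ℂ) with hC
  set u := Complex.exp ((S : ℂ) * I) with hu1
  set u' := Complex.exp (-((S : ℂ) * I)) with hu2
  have h1 : afR S R * conj (afR S R) + bfR S R * conj (bfR S R) = 1 := by
    rw [conj_afR', conj_bfR', afR, bfR, ← hC, ← hu1, ← hu2]
    linear_combination ((R : ℂ) ^ 4 + C ^ 2 * (R : ℂ) ^ 2) * (u * u' + 1) * hu +
      (C ^ 2 + (R : ℂ) ^ 2 + 1) * hsq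
  have h2 : lfT T * conj (lfT T) = 1 := by
    rw [lfT, conj_exp_I']; exact exp_mul_exp_neg' T
  have hc0 : Real.sqrt (1 - R ^ 2) ^ 2 = 1 - R ^ 2 :=
    Real.sq_sqrt (by linarith : (0:ℝ) ≤ 1 - R ^ 2)
  have hcos2S : Real.cos (2 * S) = 1 - 2 * Real.sin S ^ 2 := by
    have := Real.sin_sq_add_cos_sq S
    rw [Real.cos_two_mul]; nlinarith
  have hcosT : Real.cos T = 1 - 2 * Real.sin (T / 2) ^ 2 := by
    have h := Real.cos_two_mul (T / 2)
    have h2 := Real.sin_sq_add_cos_sq (T / 2)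
    rw [show (2:ℝ) * (T / 2) = T by ring] at h
    nlinarith
  have hreal : 2 * Real.sqrt (1 - R ^ 2) ^ 2 + R ^ 2 * (2 * Real.cos (2 * S))
      = 2 * Real.cos T := by
    nlinarith [hRs, hc0, hcos2S, hcosT]
  have htr : afR S R + conj (afR S R) = ((2 * Real.cos T : ℝ) : ℂ) := by
    rw [conj_afR', afR, ← hC, ← hu1, ← hu2]
    have husum : u ^ 2 + u' ^ 2 = ((2 * Real.cos (2 * S) : ℝ) : ℂ) := by
      rw [hu1, hu2, exp_sq', exp_neg_sq']; exact two_cos' (2 * S)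
    rw [← hreal, Complex.ofReal_add, Complex.ofReal_mul, Complex.ofReal_mul,
      Complex.ofReal_pow, Complex.ofReal_pow, Complex.ofReal_ofNat]
    linear_combination (R : ℂ) ^ 2 * husum
  refine ⟨hR0, hR1, h1, h2, htr, ?_, ?_⟩
  · rw [htr, lfT, conj_exp_I']
    exact two_cos' T
  · rw [bfR]
    refine mul_ne_zero (mul_ne_zero ?_ ?_) ?_
    · have hpos : 0 < Real.sqrt (1 - R ^ 2) := Real.sqrt_pos.2 (by nlinarith)
      exact Complex.ofReal_ne_zero.mpr hpos.ne'
    · exact Complex.ofReal_ne_zero.mpr hR0.ne'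
    · exact sub_ne_zero_of_ne (exp_sq_ne_one' S hS)

open Complex Matrix ComplexConjugate in
lemma nu_facts' (S R T : ℝ) (hb : bfR S R ≠ 0) :
    0 < nuR S R T ∧ ((nuR S R T : ℝ) : ℂ) ≠ 0 ∧
    conj ((nuR S R T : ℝ) : ℂ) = ((nuR S R T : ℝ) : ℂ) ∧
    ((nuR S R T : ℝ) : ℂ) ^ 2 =
      bfR S R * conj (bfR S R) + (lfT T - afR S R) * conj (lfT T - afR S R) := by
  have hpos : 0 < Complex.normSq (bfR S R) + Complex.normSq (lfT T - afR S R) :=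
    add_pos_of_pos_of_nonneg (Complex.normSq_pos.2 hb) (Complex.normSq_nonneg _)
  have hν : 0 < nuR S R T := Real.sqrt_pos.2 hpos
  refine ⟨hν, Complex.ofReal_ne_zero.mpr hν.ne', Complex.conj_ofReal _, ?_⟩
  rw [← Complex.ofReal_pow, nuR, Real.sq_sqrt hpos.le, Complex.ofReal_add,
    Complex.mul_conj, Complex.mul_conj]

open Complex Matrix ComplexConjugate in
lemma star_mem_SU' {A : Matrix (Fin 2) (Fin 2) ℂ}
    (hA : A ∈ Matrix.specialUnitaryGroup (Fin 2) ℂ) :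
    star A ∈ Matrix.specialUnitaryGroup (Fin 2) ℂ := by
  rw [Matrix.mem_specialUnitaryGroup_iff] at hA ⊢
  refine ⟨Unitary.star_mem hA.1, ?_⟩
  rw [Matrix.star_eq_conjTranspose, Matrix.det_conjTranspose, hA.2, star_one]

open Complex in
lemma contDiffAt_ofReal' {E : Type*} [NormedAddCommGroup E] [NormedSpace ℝ E]
    {f : E → ℝ} {x : E} (hf : ContDiffAt ℝ (⊤ : ℕ∞) f x) :
    ContDiffAt ℝ (⊤ : ℕ∞) (fun y => ((f y : ℝ) : ℂ)) x :=
  Complex.ofRealCLM.contDiff.contDiffAt.comp x hf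

open Complex in
lemma contDiffAt_normSq' {E : Type*} [NormedAddCommGroup E] [NormedSpace ℝ E]
    {g : E → ℂ} {x : E} (hg : ContDiffAt ℝ (⊤ : ℕ∞) g x) :
    ContDiffAt ℝ (⊤ : ℕ∞) (fun y => Complex.normSq (g y)) x := by
  have h : (fun y => Complex.normSq (g y))
      = fun y => (g y).re * (g y).re + (g y).im * (g y).im :=
    funext fun y => Complex.normSq_apply _
  rw [h]
  have hre : ContDiffAt ℝ (⊤ : ℕ∞) (fun y => (g y).re) x :=
    Complex.reCLM.contDiff.contDiffAt.comp x hg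
  have him : ContDiffAt ℝ (⊤ : ℕ∞) (fun y => (g y).im) x :=
    Complex.imCLM.contDiff.contDiffAt.comp x hg
  exact (hre.mul hre).add (him.mul him)

/-- **Lemma 5.** Let `𝒪` be a neighbourhood of the origin in `ℝⁿ` and `s, t : 𝒪 → (0,π)`
smooth with `sin(t(x)/2) < sin(s(x))` on `𝒪`.  With `ζ(x)` the rotation by
`r(x) = sin(t(x)/2)/sin(s(x))`, `η(x) = D(s(x)) ζ(x) D(s(x))⁻¹ ζ(x)⁻¹` and `δ(x) = D(t(x))`:
`η(x)` lies in `SU(2)` and is regular for `x ∈ 𝒪`, `trace η(x) = 2 cos t(x) = trace δ(x)`,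
and the germs at the origin of `η` and `δ` are conjugate in `C^∞_{n,SU(2)}`. -/
theorem su2_commutator_conjugate_to_diagonal (n : ℕ) (hn : 1 ≤ n)
    (𝒪 : Set (EuclideanSpace ℝ (Fin n))) (h𝒪 : 𝒪 ∈ 𝓝 (0 : EuclideanSpace ℝ (Fin n)))
    (s t : EuclideanSpace ℝ (Fin n) → ℝ)
    (hs : ContDiffOn ℝ (⊤ : ℕ∞) s 𝒪) (ht : ContDiffOn ℝ (⊤ : ℕ∞) t 𝒪)
    (hsmem : ∀ x ∈ 𝒪, s x ∈ Set.Ioo 0 Real.pi)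
    (htmem : ∀ x ∈ 𝒪, t x ∈ Set.Ioo 0 Real.pi)
    (hlt : ∀ x ∈ 𝒪, Real.sin (t x / 2) < Real.sin (s x))
    (ζ η δ : EuclideanSpace ℝ (Fin n) → Matrix (Fin 2) (Fin 2) ℂ)
    (hζ : ∀ x, ζ x = su2Rot (Real.sin (t x / 2) / Real.sin (s x)))
    (hη : ∀ x, η x = su2Diag (s x) * ζ x * (su2Diag (s x))⁻¹ * (ζ x)⁻¹)
    (hδ : ∀ x, δ x = su2Diag (t x)) :
    (∀ x ∈ 𝒪, η x ∈ Matrix.specialUnitaryGroup (Fin 2) ℂ ∧ η x ≠ 1 ∧ η x ≠ -1) ∧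
    (∀ x ∈ 𝒪, (η x).trace = ((2 * Real.cos (t x) : ℝ) : ℂ) ∧
      (δ x).trace = ((2 * Real.cos (t x) : ℝ) : ℂ)) ∧
    (∃ ξ : EuclideanSpace ℝ (Fin n) → SU2,
      (∀ᶠ x in 𝓝 (0 : EuclideanSpace ℝ (Fin n)), ∀ i j : Fin 2,
        ContDiffAt ℝ (⊤ : ℕ∞) (fun y => (ξ y : Matrix (Fin 2) (Fin 2) ℂ) i j) x) ∧
      (∀ᶠ x in 𝓝 (0 : EuclideanSpace ℝ (Fin n)),
        (ξ x : Matrix (Fin 2) (Fin 2) ℂ) * η x * ((ξ x)⁻¹ : SU2) = δ x)) := by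
  have main : ∀ x ∈ 𝒪,
      0 < Real.sin (t x / 2) / Real.sin (s x) ∧
      Real.sin (t x / 2) / Real.sin (s x) < 1 ∧
      η x = !![afR (s x) (Real.sin (t x / 2) / Real.sin (s x)),
               bfR (s x) (Real.sin (t x / 2) / Real.sin (s x));
               -(starRingEnd ℂ) (bfR (s x) (Real.sin (t x / 2) / Real.sin (s x))),
               (starRingEnd ℂ) (afR (s x) (Real.sin (t x / 2) / Real.sin (s x)))] ∧
      (!![afR (s x) (Real.sin (t x / 2) / Real.sin (s x)),
               bfR (s x) (Real.sin (t x / 2) / Real.sin (s x));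
               -(starRingEnd ℂ) (bfR (s x) (Real.sin (t x / 2) / Real.sin (s x))),
               (starRingEnd ℂ) (afR (s x) (Real.sin (t x / 2) / Real.sin (s x)))] ∈
        Matrix.specialUnitaryGroup (Fin 2) ℂ) ∧
      (PfR (s x) (Real.sin (t x / 2) / Real.sin (s x)) (t x) ∈
        Matrix.specialUnitaryGroup (Fin 2) ℂ) ∧
      (!![afR (s x) (Real.sin (t x / 2) / Real.sin (s x)),
               bfR (s x) (Real.sin (t x / 2) / Real.sin (s x));
               -(starRingEnd ℂ) (bfR (s x) (Real.sin (t x / 2) / Real.sin (s x))),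
               (starRingEnd ℂ) (afR (s x) (Real.sin (t x / 2) / Real.sin (s x)))] *
          PfR (s x) (Real.sin (t x / 2) / Real.sin (s x)) (t x) =
        PfR (s x) (Real.sin (t x / 2) / Real.sin (s x)) (t x) *
          !![lfT (t x), 0; 0, (starRingEnd ℂ) (lfT (t x))]) ∧
      afR (s x) (Real.sin (t x / 2) / Real.sin (s x)) +
        (starRingEnd ℂ) (afR (s x) (Real.sin (t x / 2) / Real.sin (s x))) =
        ((2 * Real.cos (t x) : ℝ) : ℂ) ∧
      bfR (s x) (Real.sin (t x / 2) / Real.sin (s x)) ≠ 0 ∧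
      0 < nuR (s x) (Real.sin (t x / 2) / Real.sin (s x)) (t x) := by
    intro x hx
    obtain ⟨hR0, hR1, h1, h2, htr, h3, hb⟩ :=
      pointwise' (s x) (t x) (Real.sin (t x / 2) / Real.sin (s x))
        (hsmem x hx) (htmem x hx) (hlt x hx) rfl
    obtain ⟨hνpos, hν0, hνconj, hν2⟩ :=
      nu_facts' (s x) (Real.sin (t x / 2) / Real.sin (s x)) (t x) hb
    obtain ⟨hmemA, hmemP, hcomm⟩ := su2_core' _ _ _ _ h1 h2 h3 hν0 hνconj hν2
    refine ⟨hR0, hR1, ?_, hmemA, hmemP, hcomm, htr, hb, hνpos⟩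
    rw [hη, hζ]
    exact eta_eq' (s x) _ (by nlinarith)
  refine ⟨?_, ?_, ?_⟩
  · intro x hx
    obtain ⟨hR0, hR1, hηx, hmemA, hmemP, hcomm, htr, hb, hνpos⟩ := main x hx
    obtain ⟨hT0, hT1⟩ := htmem x hx
    have htrη : (η x).trace = ((2 * Real.cos (t x) : ℝ) : ℂ) := by
      rw [hηx, Matrix.trace_fin_two_of]; exact htr
    refine ⟨hηx ▸ hmemA, ?_, ?_⟩
    · intro h
      have h2 : ((2 * Real.cos (t x) : ℝ) : ℂ) = 2 := by
        rw [← htrη, h, Matrix.trace_one]; norm_num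
      have h3 : 2 * Real.cos (t x) = 2 := by exact_mod_cast h2
      have h4 : Real.cos (t x) < Real.cos 0 :=
        Real.cos_lt_cos_of_nonneg_of_le_pi le_rfl hT1.le hT0
      rw [Real.cos_zero] at h4
      linarith
    · intro h
      have h2 : ((2 * Real.cos (t x) : ℝ) : ℂ) = -2 := by
        rw [← htrη, h, Matrix.trace_neg, Matrix.trace_one]; norm_num
      have h3 : 2 * Real.cos (t x) = -2 := by exact_mod_cast h2
      have h4 : Real.cos Real.pi < Real.cos (t x) :=
        Real.cos_lt_cos_of_nonneg_of_le_pi hT0.le le_rfl hT1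
      rw [Real.cos_pi] at h4
      linarith
  · intro x hx
    obtain ⟨hR0, hR1, hηx, hmemA, hmemP, hcomm, htr, hb, hνpos⟩ := main x hx
    constructor
    · rw [hηx, Matrix.trace_fin_two_of]; exact htr
    · rw [hδ, su2Diag, Matrix.trace_fin_two_of]
      exact two_cos' (t x)
  · classical
    refine ⟨fun x => if h : star (PfR (s x) (Real.sin (t x / 2) / Real.sin (s x)) (t x)) ∈
        Matrix.specialUnitaryGroup (Fin 2) ℂ then (⟨_, h⟩ : SU2) else 1, ?_, ?_⟩
    · -- smoothness
      have hU : interior 𝒪 ∈ 𝓝 (0 : EuclideanSpace ℝ (Fin n)) := interior_mem_nhds.2 h𝒪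
      filter_upwards [hU] with x hxU i j
      have hx : x ∈ 𝒪 := interior_subset hxU
      obtain ⟨hR0, hR1, hηx, hmemA, hmemP, hcomm, htr, hb, hνpos⟩ := main x hx
      have hsinS : 0 < Real.sin (s x) :=
        Real.sin_pos_of_pos_of_lt_pi (hsmem x hx).1 (hsmem x hx).2
      have h𝒪x : 𝒪 ∈ 𝓝 x := mem_interior_iff_mem_nhds.1 hxU
      have hsx : ContDiffAt ℝ (⊤ : ℕ∞) s x := hs.contDiffAt h𝒪x
      have htx : ContDiffAt ℝ (⊤ : ℕ∞) t x := ht.contDiffAt h𝒪x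
      have hsinSx : ContDiffAt ℝ (⊤ : ℕ∞) (fun y => Real.sin (s y)) x :=
        Real.contDiff_sin.contDiffAt.comp x hsx
      have hsinTx : ContDiffAt ℝ (⊤ : ℕ∞) (fun y => Real.sin (t y / 2)) x :=
        Real.contDiff_sin.contDiffAt.comp x (htx.div_const 2)
      have hr : ContDiffAt ℝ (⊤ : ℕ∞) (fun y => Real.sin (t y / 2) / Real.sin (s y)) x :=
        hsinTx.div hsinSx hsinS.ne'
      have hrC : ContDiffAt ℝ (⊤ : ℕ∞)
          (fun y => ((Real.sin (t y / 2) / Real.sin (s y) : ℝ) : ℂ)) x :=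
        contDiffAt_ofReal' hr
      have hcr : ContDiffAt ℝ (⊤ : ℕ∞)
          (fun y => Real.sqrt (1 - (Real.sin (t y / 2) / Real.sin (s y)) ^ 2)) x := by
        refine (Real.contDiffAt_sqrt ?_).comp x (contDiffAt_const.sub (hr.pow 2))
        nlinarith
      have hcC : ContDiffAt ℝ (⊤ : ℕ∞)
          (fun y => ((Real.sqrt (1 - (Real.sin (t y / 2) / Real.sin (s y)) ^ 2) : ℝ) : ℂ)) x :=
        contDiffAt_ofReal' hcr
      have hexp : ContDiffAt ℝ (⊤ : ℕ∞) (fun y => Complex.exp ((s y : ℂ) * Complex.I)) x :=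
        Complex.contDiff_exp.contDiffAt.comp x ((contDiffAt_ofReal' hsx).mul contDiffAt_const)
      have hexpT : ContDiffAt ℝ (⊤ : ℕ∞) (fun y => Complex.exp ((t y : ℂ) * Complex.I)) x :=
        Complex.contDiff_exp.contDiffAt.comp x ((contDiffAt_ofReal' htx).mul contDiffAt_const)
      have ha : ContDiffAt ℝ (⊤ : ℕ∞)
          (fun y => afR (s y) (Real.sin (t y / 2) / Real.sin (s y))) x := by
        simp only [afR]
        exact (hcC.pow 2).add ((hrC.pow 2).mul (hexp.pow 2))
      have hbf : ContDiffAt ℝ (⊤ : ℕ∞)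
          (fun y => bfR (s y) (Real.sin (t y / 2) / Real.sin (s y))) x := by
        simp only [bfR]
        exact (hcC.mul hrC).mul ((hexp.pow 2).sub contDiffAt_const)
      have hlf : ContDiffAt ℝ (⊤ : ℕ∞) (fun y => lfT (t y)) x := by
        simp only [lfT]
        exact hexpT
      have hnu : ContDiffAt ℝ (⊤ : ℕ∞)
          (fun y => nuR (s y) (Real.sin (t y / 2) / Real.sin (s y)) (t y)) x := by
        simp only [nuR]
        refine (Real.contDiffAt_sqrt ?_).comp x
          ((contDiffAt_normSq' hbf).add (contDiffAt_normSq' (hlf.sub ha)))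
        have : 0 < Complex.normSq (bfR (s x) (Real.sin (t x / 2) / Real.sin (s x))) :=
          Complex.normSq_pos.2 hb
        have h2 := Complex.normSq_nonneg
          (lfT (t x) - afR (s x) (Real.sin (t x / 2) / Real.sin (s x)))
        positivity
      have hνinv : ContDiffAt ℝ (⊤ : ℕ∞)
          (fun y => (((nuR (s y) (Real.sin (t y / 2) / Real.sin (s y)) (t y) : ℝ)) : ℂ)⁻¹) x :=
        (contDiffAt_ofReal' hnu).inv (Complex.ofReal_ne_zero.mpr hνpos.ne')
      have hconj : ∀ {g : EuclideanSpace ℝ (Fin n) → ℂ}, ContDiffAt ℝ (⊤ : ℕ∞) g x →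
          ContDiffAt ℝ (⊤ : ℕ∞) (fun y => (starRingEnd ℂ) (g y)) x := fun hg =>
        Complex.conjCLE.contDiff.contDiffAt.comp x hg
      have hPent : ∀ i' j' : Fin 2, ContDiffAt ℝ (⊤ : ℕ∞)
          (fun y => PfR (s y) (Real.sin (t y / 2) / Real.sin (s y)) (t y) i' j') x := by
        intro i' j'
        fin_cases i' <;> fin_cases j' <;>
          simp only [PfR, Matrix.smul_apply, smul_eq_mul, Fin.zero_eta, Fin.mk_one,
            Matrix.cons_val', Matrix.cons_val_zero, Matrix.cons_val_one, Matrix.head_cons,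
            Matrix.empty_val', Matrix.cons_val_fin_one, Matrix.head_fin_const]
        · exact hνinv.mul hbf
        · exact hνinv.mul (((hconj hlf).sub (hconj ha)).neg)
        · exact hνinv.mul (hlf.sub ha)
        · exact hνinv.mul (hconj hbf)
      have hQ : ContDiffAt ℝ (⊤ : ℕ∞) (fun y =>
          (star (PfR (s y) (Real.sin (t y / 2) / Real.sin (s y)) (t y))) i j) x := by
        have he : (fun y => (star (PfR (s y) (Real.sin (t y / 2) / Real.sin (s y)) (t y))) i j)
            = fun y => (starRingEnd ℂ)
              (PfR (s y) (Real.sin (t y / 2) / Real.sin (s y)) (t y) j i) := by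
          funext y
          rfl
        rw [he]
        exact hconj (hPent j i)
      refine hQ.congr_of_eventuallyEq ?_
      filter_upwards [isOpen_interior.mem_nhds hxU] with y hyU
      have hy : y ∈ 𝒪 := interior_subset hyU
      obtain ⟨_, _, _, _, hmemPy, _, _, _, _⟩ := main y hy
      rw [dif_pos (star_mem_SU' hmemPy)]
    · -- conjugation identity
      have hU : interior 𝒪 ∈ 𝓝 (0 : EuclideanSpace ℝ (Fin n)) := interior_mem_nhds.2 h𝒪
      filter_upwards [hU] with x hxU
      have hx : x ∈ 𝒪 := interior_subset hxU
      obtain ⟨hR0, hR1, hηx, hmemA, hmemP, hcomm, htr, hb, hνpos⟩ := main x hx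
      have hmemQ := star_mem_SU' hmemP
      rw [dif_pos hmemQ]
      have hval : (((⟨star (PfR (s x) (Real.sin (t x / 2) / Real.sin (s x)) (t x)), hmemQ⟩ :
          SU2)⁻¹ : SU2) : Matrix (Fin 2) (Fin 2) ℂ)
          = PfR (s x) (Real.sin (t x / 2) / Real.sin (s x)) (t x) := star_star _
      rw [hval]
      have hPP : star (PfR (s x) (Real.sin (t x / 2) / Real.sin (s x)) (t x)) *
          PfR (s x) (Real.sin (t x / 2) / Real.sin (s x)) (t x) = 1 := hmemP.1.1
      show star (PfR (s x) (Real.sin (t x / 2) / Real.sin (s x)) (t x)) * η x *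
          PfR (s x) (Real.sin (t x / 2) / Real.sin (s x)) (t x) = δ x
      rw [hηx, Matrix.mul_assoc, hcomm, ← Matrix.mul_assoc, hPP, Matrix.one_mul, hδ, su2Diag]
      exact fin_two_ext' rfl rfl rfl (conj_exp_I' (t x))
end
end

section
/- Let T₁ be the maximal torus of diagonal matrices in SU(2). Every smooth map γ : X → SU(2) with values in T₁ that lies in the identity component of the group of smooth maps X → T₁ (i.e. can be joined to the constant map id by a continuous path of smooth T₁-valued maps) belongs to the subgroup (SU(2), M_0(SU(2))) of M_0(SU(2)) generated by commutators of constant maps with elements of M_0(SU(2)). -/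
open scoped Manifold Topology
open Filter

noncomputable section

/-- A map with values in `SU(2)` is smooth when all its matrix entries are smooth. -/
def SU2Smooth
    {EX : Type*} [NormedAddCommGroup EX] [NormedSpace ℝ EX]
    {HX : Type*} [TopologicalSpace HX] (IX : ModelWithCorners ℝ EX HX)
    {X : Type*} [TopologicalSpace X] [ChartedSpace HX X] (γ : X → SU2) : Prop :=
  ∀ i j : Fin 2, ContMDiff IX 𝓘(ℝ, ℂ) (⊤ : ℕ∞) fun x => (γ x : Matrix (Fin 2) (Fin 2) ℂ) i j

/-- A family of maps with values in `SU(2)` is (jointly) continuous when all its matrix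
entries are. -/
def SU2Cont {X : Type*} [TopologicalSpace X] (Γ : X → SU2) : Prop :=
  ∀ i j : Fin 2, Continuous fun p => (Γ p : Matrix (Fin 2) (Fin 2) ℂ) i j

private theorem ContMDiff.cmul
    {EX : Type*} [NormedAddCommGroup EX] [NormedSpace ℝ EX]
    {HX : Type*} [TopologicalSpace HX] {IX : ModelWithCorners ℝ EX HX}
    {X : Type*} [TopologicalSpace X] [ChartedSpace HX X]
    {f g : X → ℂ} (hf : ContMDiff IX 𝓘(ℝ, ℂ) (⊤ : ℕ∞) f) (hg : ContMDiff IX 𝓘(ℝ, ℂ) (⊤ : ℕ∞) g) :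
    ContMDiff IX 𝓘(ℝ, ℂ) (⊤ : ℕ∞) fun x => f x * g x :=
  ContMDiff.clm_apply ((ContinuousLinearMap.mul ℝ ℂ).contMDiff.comp hf) hg

private theorem su2_entry_mul {X : Type*} (α β : X → SU2) (x : X) (i j : Fin 2) :
    ((α x * β x : SU2) : Matrix (Fin 2) (Fin 2) ℂ) i j
      = (α x : Matrix (Fin 2) (Fin 2) ℂ) i 0 * (β x : Matrix (Fin 2) (Fin 2) ℂ) 0 j
        + (α x : Matrix (Fin 2) (Fin 2) ℂ) i 1 * (β x : Matrix (Fin 2) (Fin 2) ℂ) 1 j := by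
  show ((α x : Matrix (Fin 2) (Fin 2) ℂ) * (β x : Matrix (Fin 2) (Fin 2) ℂ)) i j = _
  rw [Matrix.mul_apply, Fin.sum_univ_two]

/-- The identity component `M₀(SU(2))` of the group `M(SU(2))` of smooth maps `X → SU(2)`:
smooth maps that can be joined to the constant map `1` by a continuous path of smooth maps.
It is a subgroup of the group of all maps `X → SU(2)` with pointwise multiplication. -/
def su2M0
    {EX : Type*} [NormedAddCommGroup EX] [NormedSpace ℝ EX]
    {HX : Type*} [TopologicalSpace HX] (IX : ModelWithCorners ℝ EX HX)
    (X : Type*) [TopologicalSpace X] [ChartedSpace HX X] : Subgroup (X → SU2) where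
  carrier := { γ | SU2Smooth IX γ ∧ ∃ Γ : X × unitInterval → SU2,
      SU2Cont Γ ∧ (∀ t : unitInterval, SU2Smooth IX fun x => Γ (x, t)) ∧
      (∀ x, Γ (x, 0) = γ x) ∧ (∀ x, Γ (x, 1) = 1) }
  one_mem' :=
    ⟨fun _ _ => contMDiff_const, fun _ => 1, fun _ _ => continuous_const,
      fun _ _ _ => contMDiff_const, fun _ => rfl, fun _ => rfl⟩
  mul_mem' := by
    rintro γ δ ⟨hγs, Γ, hΓc, hΓs, hΓ0, hΓ1⟩ ⟨hδs, Δ, hΔc, hΔs, hΔ0, hΔ1⟩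
    constructor
    · intro i j
      have h : (fun x => (((γ * δ) x : SU2) : Matrix (Fin 2) (Fin 2) ℂ) i j)
          = fun x => (γ x : Matrix (Fin 2) (Fin 2) ℂ) i 0 * (δ x : Matrix (Fin 2) (Fin 2) ℂ) 0 j
            + (γ x : Matrix (Fin 2) (Fin 2) ℂ) i 1 * (δ x : Matrix (Fin 2) (Fin 2) ℂ) 1 j :=
        funext fun x => su2_entry_mul γ δ x i j
      rw [h]
      exact (ContMDiff.cmul (hγs i 0) (hδs 0 j)).add (ContMDiff.cmul (hγs i 1) (hδs 1 j))
    · refine ⟨fun p => Γ p * Δ p, ?_, ?_,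
        fun x => show Γ (x, 0) * Δ (x, 0) = (γ * δ) x by rw [hΓ0, hΔ0]; rfl,
        fun x => show Γ (x, 1) * Δ (x, 1) = 1 by rw [hΓ1, hΔ1, one_mul]⟩
      · intro i j
        have h : (fun p => ((Γ p * Δ p : SU2) : Matrix (Fin 2) (Fin 2) ℂ) i j)
            = fun p => (Γ p : Matrix (Fin 2) (Fin 2) ℂ) i 0 * (Δ p : Matrix (Fin 2) (Fin 2) ℂ) 0 j
              + (Γ p : Matrix (Fin 2) (Fin 2) ℂ) i 1 * (Δ p : Matrix (Fin 2) (Fin 2) ℂ) 1 j :=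
          funext fun p => su2_entry_mul Γ Δ p i j
      -- entrywise continuity of the product
        rw [h]
        exact ((hΓc i 0).mul (hΔc 0 j)).add ((hΓc i 1).mul (hΔc 1 j))
      · intro t i j
        have h : (fun x => ((Γ (x, t) * Δ (x, t) : SU2) : Matrix (Fin 2) (Fin 2) ℂ) i j)
            = fun x => (Γ (x, t) : Matrix (Fin 2) (Fin 2) ℂ) i 0 *
                (Δ (x, t) : Matrix (Fin 2) (Fin 2) ℂ) 0 j
              + (Γ (x, t) : Matrix (Fin 2) (Fin 2) ℂ) i 1 *
                (Δ (x, t) : Matrix (Fin 2) (Fin 2) ℂ) 1 j :=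
          funext fun x => su2_entry_mul (fun x => Γ (x, t)) (fun x => Δ (x, t)) x i j
        rw [h]
        exact (ContMDiff.cmul (hΓs t i 0) (hΔs t 0 j)).add (ContMDiff.cmul (hΓs t i 1) (hΔs t 1 j))
  inv_mem' := by
    rintro γ ⟨hγs, Γ, hΓc, hΓs, hΓ0, hΓ1⟩
    have entry_inv : ∀ (g : SU2) (i j : Fin 2),
        ((g⁻¹ : SU2) : Matrix (Fin 2) (Fin 2) ℂ) i j
          = (starRingEnd ℂ) ((g : Matrix (Fin 2) (Fin 2) ℂ) j i) := fun g i j => rfl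
    constructor
    · intro i j
      have h : (fun x => ((γ⁻¹ x : SU2) : Matrix (Fin 2) (Fin 2) ℂ) i j)
          = fun x => (starRingEnd ℂ) ((γ x : Matrix (Fin 2) (Fin 2) ℂ) j i) :=
        funext fun x => entry_inv (γ x) i j
      rw [h]
      exact (Complex.conjCLE.contDiff.contMDiff).comp (hγs j i)
    · refine ⟨fun p => (Γ p)⁻¹, ?_, ?_,
        fun x => show (Γ (x, 0))⁻¹ = γ⁻¹ x by rw [hΓ0]; rfl,
        fun x => show (Γ (x, 1))⁻¹ = 1 by rw [hΓ1, inv_one]⟩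
      · intro i j
        have h : (fun p => (((Γ p)⁻¹ : SU2) : Matrix (Fin 2) (Fin 2) ℂ) i j)
            = fun p => (starRingEnd ℂ) ((Γ p : Matrix (Fin 2) (Fin 2) ℂ) j i) :=
          funext fun p => entry_inv (Γ p) i j
        rw [h]
        exact Complex.conjCLE.continuous.comp (hΓc j i)
      · intro t i j
        have h : (fun x => (((Γ (x, t))⁻¹ : SU2) : Matrix (Fin 2) (Fin 2) ℂ) i j)
            = fun x => (starRingEnd ℂ) ((Γ (x, t) : Matrix (Fin 2) (Fin 2) ℂ) j i) :=
          funext fun x => entry_inv (Γ (x, t)) i j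
        rw [h]
        exact (Complex.conjCLE.contDiff.contMDiff).comp (hΓs t j i)

/-!
A diagonal map `x ↦ diag(σ x, conj (σ x))` whose entry `σ` avoids `-1` has a smooth logarithm
`σ = exp (i θ)`, and conjugating `δ = diag(exp (-i θ/2), exp (i θ/2))` by the Weyl element `w`
inverts it, so `w δ w⁻¹ δ⁻¹ = diag(σ, conj σ)`; and `δ ∈ M₀` by shrinking `θ` to `0`.
Along a path `Γ_t` of torus-valued maps, compactness of `X` makes `Γ_t Γ_{t₀}⁻¹` close to `1`
uniformly on `X` for `t` near `t₀`, so it is such a commutator; hence membership of `Γ_t` in the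
subgroup generated by these commutators is locally constant in `t`, and `Γ_1 = 1`.
-/

open ComplexConjugate Complex

theorem Subgroup.mem_iff_of_eventually_mul_inv_mem {T G : Type*} [TopologicalSpace T]
    [PreconnectedSpace T] [Group G] (H : Subgroup G) {f : T → G}
    (hf : ∀ t₀, ∀ᶠ t in 𝓝 t₀, f t * (f t₀)⁻¹ ∈ H) (s t : T) : f s ∈ H ↔ f t ∈ H := by
  have hloc : IsLocallyConstant fun t => f t ∈ H :=
    (IsLocallyConstant.iff_eventually_eq _).2 fun t₀ => (hf t₀).mono fun t ht =>
      propext <| by simpa using H.mul_mem_cancel_left (y := f t₀) ht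
  exact iff_of_eq (hloc.apply_eq_of_preconnectedSpace s t)

theorem eventually_forall_mul_inv_mem_of_compactSpace {X T G : Type*} [TopologicalSpace X]
    [CompactSpace X] [TopologicalSpace T] [TopologicalSpace G] [Group G] [IsTopologicalGroup G]
    {F : X × T → G} (hF : Continuous F) {U : Set G} (hU : U ∈ 𝓝 1) (t₀ : T) :
    ∀ᶠ t in 𝓝 t₀, ∀ x, F (x, t) * (F (x, t₀))⁻¹ ∈ U := by
  have hloc : ∀ x ∈ (Set.univ : Set X),
      ∀ᶠ z : T × X in 𝓝 (t₀, x), F (z.2, z.1) * (F (z.2, t₀))⁻¹ ∈ U := by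
    intro x _
    have hcont : Continuous fun z : T × X => F (z.2, z.1) * (F (z.2, t₀))⁻¹ := by fun_prop
    exact hcont.tendsto (t₀, x) (by simpa using hU)
  simpa using isCompact_univ.eventually_forall_of_forall_eventually hloc

/-- The maximal torus `T₁` of `SU(2)`, parametrised by the unit circle. -/
def torus : Circle →* SU2 where
  toFun z := ⟨Matrix.diagonal ![(z : ℂ), conj (z : ℂ)], by
    rw [Matrix.mem_specialUnitaryGroup_iff, Matrix.mem_unitaryGroup_iff]
    refine ⟨?_, ?_⟩
    · ext i j
      fin_cases i <;> fin_cases j <;>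
        simp [Matrix.star_eq_conjTranspose, mul_conj, conj_mul', Circle.norm_coe]
    · simp [mul_conj]⟩
  map_one' := by
    ext i j
    fin_cases i <;> fin_cases j <;> simp
  map_mul' z w := by
    ext i j
    fin_cases i <;> fin_cases j <;> simp

@[simp]
theorem coe_torus (z : Circle) :
    (torus z : Matrix (Fin 2) (Fin 2) ℂ) = !![(z : ℂ), 0; 0, conj (z : ℂ)] :=
  Matrix.diagonal_fin_two _

def weyl : SU2 := ⟨!![0, -1; 1, 0], by
  rw [Matrix.mem_specialUnitaryGroup_iff, Matrix.mem_unitaryGroup_iff]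
  refine ⟨?_, by simp [Matrix.det_fin_two]⟩
  ext i j
  fin_cases i <;> fin_cases j <;> simp [Matrix.star_eq_conjTranspose, Matrix.mul_apply]⟩

theorem weyl_mul_torus_mul_inv (z : Circle) : weyl * torus z * weyl⁻¹ = torus z⁻¹ := by
  apply Subtype.ext
  change !![0, -1; 1, 0] * (torus z : Matrix (Fin 2) (Fin 2) ℂ) * star !![0, -1; 1, 0]
    = (torus z⁻¹ : Matrix (Fin 2) (Fin 2) ℂ)
  rw [coe_torus, coe_torus, Circle.coe_inv_eq_conj]
  ext i j
  fin_cases i <;> fin_cases j <;>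
    simp [Matrix.mul_apply, Fin.sum_univ_two, Matrix.star_eq_conjTranspose,
      Matrix.conjTranspose_apply]

theorem weyl_commutator_torus (z : Circle) :
    weyl * torus z * weyl⁻¹ * (torus z)⁻¹ = torus (z⁻¹ * z⁻¹) := by
  rw [weyl_mul_torus_mul_inv, ← map_inv, ← map_mul]

theorem exists_torus_eq_of_offDiag_eq_zero (g : SU2) (h01 : (g : Matrix (Fin 2) (Fin 2) ℂ) 0 1 = 0)
    (h10 : (g : Matrix (Fin 2) (Fin 2) ℂ) 1 0 = 0) : ∃ z : Circle, torus z = g := by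
  set a := (g : Matrix (Fin 2) (Fin 2) ℂ) 0 0
  have hunit : conj a * a = 1 := by
    simpa [Matrix.mul_apply, Matrix.star_eq_conjTranspose, h10] using
      congrFun (congrFun g.prop.1.1 0) 0
  have hdet : a * (g : Matrix (Fin 2) (Fin 2) ℂ) 1 1 = 1 := by
    simpa [Matrix.det_fin_two, h01] using g.prop.2
  have h11 : (g : Matrix (Fin 2) (Fin 2) ℂ) 1 1 = conj a := by
    linear_combination conj a * hdet - (g : Matrix (Fin 2) (Fin 2) ℂ) 1 1 * hunit
  have hnorm : ‖a‖ = 1 := by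
    rw [conj_mul'] at hunit
    exact (pow_eq_one_iff_of_nonneg (norm_nonneg _) two_ne_zero).1 (by exact_mod_cast hunit)
  have hexp : (Circle.exp (arg a) : ℂ) = a := by
    simpa [hnorm] using norm_mul_exp_arg_mul_I a
  refine ⟨Circle.exp (arg a), Subtype.ext ?_⟩
  rw [coe_torus, hexp, Matrix.eta_fin_two (g : Matrix (Fin 2) (Fin 2) ℂ), h01, h10, h11]

section Smooth

variable {EX : Type*} [NormedAddCommGroup EX] [NormedSpace ℝ EX]
  {HX : Type*} [TopologicalSpace HX] {IX : ModelWithCorners ℝ EX HX}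
  {X : Type*} [TopologicalSpace X] [ChartedSpace HX X]

theorem ContMDiff.arg {f : X → ℂ} (hf : ContMDiff IX 𝓘(ℝ, ℂ) (⊤ : ℕ∞) f)
    (hslit : ∀ x, f x ∈ slitPlane) : ContMDiff IX 𝓘(ℝ) (⊤ : ℕ∞) fun x => arg (f x) := by
  intro x
  have harg : ContDiffAt ℝ (⊤ : ℕ∞) (fun z => (log z).im) (f x) :=
    imCLM.contDiff.contDiffAt.comp _ ((contDiffAt_log (hslit x)).restrict_scalars ℝ)
  simp only [log_im] at harg
  exact harg.comp_contMDiffAt (hf x)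

theorem ContMDiff.circleExp {θ : X → ℝ} (hθ : ContMDiff IX 𝓘(ℝ) (⊤ : ℕ∞) θ) :
    ContMDiff IX 𝓘(ℝ, ℂ) (⊤ : ℕ∞) fun x => (Circle.exp (θ x) : ℂ) := by
  have hexp : ContDiff ℝ (⊤ : ℕ∞) fun t : ℝ => exp (t * I) :=
    contDiff_exp.comp (ofRealCLM.contDiff.mul contDiff_const)
  exact hexp.comp_contMDiff hθ

theorem su2Smooth_torus_comp {σ : X → Circle}
    (hσ : ContMDiff IX 𝓘(ℝ, ℂ) (⊤ : ℕ∞) fun x => (σ x : ℂ)) :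
    SU2Smooth IX fun x => torus (σ x) := by
  intro i j
  fin_cases i <;> fin_cases j
  exacts [hσ, contMDiff_const, contMDiff_const, conjCLE.contDiff.contMDiff.comp hσ]

theorem su2Cont_torus_comp {Y : Type*} [TopologicalSpace Y] {σ : Y → Circle}
    (hσ : Continuous σ) : SU2Cont fun p => torus (σ p) := by
  intro i j
  fin_cases i <;> fin_cases j
  exacts [continuous_subtype_val.comp hσ, continuous_const, continuous_const,
    continuous_conj.comp (continuous_subtype_val.comp hσ)]

theorem torus_circleExp_comp_mem_su2M0 {θ : X → ℝ} (hθ : ContMDiff IX 𝓘(ℝ) (⊤ : ℕ∞) θ) :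
    (fun x => torus (Circle.exp (θ x))) ∈ su2M0 IX X := by
  have hcont : Continuous fun p : X × unitInterval => (1 - (p.2 : ℝ)) * θ p.1 := by
    have := hθ.continuous
    fun_prop
  refine ⟨su2Smooth_torus_comp hθ.circleExp,
    fun p => torus (Circle.exp ((1 - (p.2 : ℝ)) * θ p.1)),
    su2Cont_torus_comp (Circle.exp.continuous.comp hcont),
    fun t => su2Smooth_torus_comp
      (ContMDiff.circleExp (θ := fun x => (1 - (t : ℝ)) * θ x) (contMDiff_const.mul hθ)),
    fun x => by simp, fun x => by simp⟩

variable (IX X) in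
/-- The generators of the subgroup `(SU(2), M₀(SU(2)))` of the paper. -/
def constCommutatorSet : Set (X → SU2) :=
  { c | ∃ (g : SU2) (δ : X → SU2),
      δ ∈ su2M0 IX X ∧ c = (fun _ => g) * δ * (fun _ => g)⁻¹ * δ⁻¹ }

theorem torus_comp_mem_constCommutatorSet {σ : X → Circle}
    (hσ : ContMDiff IX 𝓘(ℝ, ℂ) (⊤ : ℕ∞) fun x => (σ x : ℂ))
    (hslit : ∀ x, (σ x : ℂ) ∈ slitPlane) :
    (fun x => torus (σ x)) ∈ constCommutatorSet IX X := by
  refine ⟨weyl, fun x => torus (Circle.exp (-(Complex.arg (σ x) / 2))),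
    torus_circleExp_comp_mem_su2M0 ((hσ.arg hslit).div_const 2).neg, funext fun x => ?_⟩
  change torus (σ x) = weyl * torus _ * weyl⁻¹ * (torus _)⁻¹
  rw [weyl_commutator_torus, ← Circle.exp_neg, neg_neg, ← Circle.exp_add, add_halves,
    Circle.exp_arg]

theorem torus_comp_mem_closure_constCommutatorSet_iff [CompactSpace X] {T : Type*}
    [TopologicalSpace T] [PreconnectedSpace T] {ρ : X × T → Circle} (hρ : Continuous ρ)
    (hsmooth : ∀ t, ContMDiff IX 𝓘(ℝ, ℂ) (⊤ : ℕ∞) fun x => (ρ (x, t) : ℂ)) (s t : T) :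
    (fun x => torus (ρ (x, s))) ∈ Subgroup.closure (constCommutatorSet IX X) ↔
      (fun x => torus (ρ (x, t))) ∈ Subgroup.closure (constCommutatorSet IX X) := by
  refine Subgroup.mem_iff_of_eventually_mul_inv_mem _
    (f := fun t x => torus (ρ (x, t))) (fun t₀ => ?_) s t
  have hU : (fun z : Circle => (z : ℂ)) ⁻¹' slitPlane ∈ 𝓝 1 :=
    (isOpen_slitPlane.preimage continuous_subtype_val).mem_nhds one_mem_slitPlane
  filter_upwards [eventually_forall_mul_inv_mem_of_compactSpace hρ hU t₀] with t hslit
  have hquot := torus_comp_mem_constCommutatorSet (σ := fun x => ρ (x, t) * (ρ (x, t₀))⁻¹)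
    (by
      simp only [Circle.coe_mul, Circle.coe_inv_eq_conj]
      exact ContMDiff.cmul (hsmooth t) (conjCLE.contDiff.contMDiff.comp (hsmooth t₀))) hslit
  simp only [map_mul, map_inv] at hquot
  exact Subgroup.subset_closure hquot

end Smooth

theorem torus_valued_maps_in_commutator_subgroup_general
    {EX : Type*} [NormedAddCommGroup EX] [NormedSpace ℝ EX]
    {HX : Type*} [TopologicalSpace HX] (IX : ModelWithCorners ℝ EX HX)
    (X : Type*) [TopologicalSpace X] [ChartedSpace HX X]
    [CompactSpace X]
    (γ : X → SU2)
    (hpath : ∃ Γ : X × unitInterval → SU2, SU2Cont Γ ∧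
      (∀ t : unitInterval, SU2Smooth IX fun x => Γ (x, t)) ∧
      (∀ p : X × unitInterval, (Γ p : Matrix (Fin 2) (Fin 2) ℂ) 0 1 = 0 ∧
        (Γ p : Matrix (Fin 2) (Fin 2) ℂ) 1 0 = 0) ∧
      (∀ x, Γ (x, 0) = γ x) ∧ (∀ x, Γ (x, 1) = 1)) :
    γ ∈ Subgroup.closure { c : X → SU2 | ∃ (g : SU2) (δ : X → SU2),
      δ ∈ su2M0 IX X ∧ c = (fun _ => g) * δ * (fun _ => g)⁻¹ * δ⁻¹ } := by
  obtain ⟨Γ, hΓc, hΓs, hΓd, hΓ0, hΓ1⟩ := hpath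
  choose ρ hρ using fun p => exists_torus_eq_of_offDiag_eq_zero (Γ p) (hΓd p).1 (hΓd p).2
  have hρ00 : ∀ p, (ρ p : ℂ) = (Γ p : Matrix (Fin 2) (Fin 2) ℂ) 0 0 := fun p => by
    rw [← hρ p]; rfl
  have hρc : Continuous fun p => (ρ p : ℂ) := by simpa [hρ00] using hΓc 0 0
  have hfamily := torus_comp_mem_closure_constCommutatorSet_iff (IX := IX) (ρ := ρ)
    (continuous_induced_rng.2 hρc)
    (fun t => by simpa [hρ00] using hΓs t 0 0) 0 1
  simp only [hρ, hΓ0, hΓ1] at hfamily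
  exact hfamily.2 (one_mem _)

/-- **Step one in the proof of perfectness.** Let `T₁` be the maximal torus of diagonal
matrices in `SU(2)`.  Every smooth map `γ : X → SU(2)` with values in `T₁` which lies in the
identity component of the group of smooth `T₁`-valued maps belongs to the subgroup
`(SU(2), M₀(SU(2)))` of `M₀(SU(2))` generated by commutators of constant maps with elements
of `M₀(SU(2))`. -/
theorem torus_valued_maps_in_commutator_subgroup
    {EX : Type*} [NormedAddCommGroup EX] [NormedSpace ℝ EX]
    {HX : Type*} [TopologicalSpace HX] (IX : ModelWithCorners ℝ EX HX)
    (X : Type*) [TopologicalSpace X] [ChartedSpace HX X]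
    [IsManifold IX (⊤ : ℕ∞) X] [CompactSpace X] [IX.Boundaryless]
    (γ : X → SU2) (hsm : SU2Smooth IX γ)
    (hdiag : ∀ x, (γ x : Matrix (Fin 2) (Fin 2) ℂ) 0 1 = 0 ∧
      (γ x : Matrix (Fin 2) (Fin 2) ℂ) 1 0 = 0)
    (hpath : ∃ Γ : X × unitInterval → SU2, SU2Cont Γ ∧
      (∀ t : unitInterval, SU2Smooth IX fun x => Γ (x, t)) ∧
      (∀ p : X × unitInterval, (Γ p : Matrix (Fin 2) (Fin 2) ℂ) 0 1 = 0 ∧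
        (Γ p : Matrix (Fin 2) (Fin 2) ℂ) 1 0 = 0) ∧
      (∀ x, Γ (x, 0) = γ x) ∧ (∀ x, Γ (x, 1) = 1)) :
    γ ∈ Subgroup.closure { c : X → SU2 | ∃ (g : SU2) (δ : X → SU2),
      δ ∈ su2M0 IX X ∧ c = (fun _ => g) * δ * (fun _ => g)⁻¹ * δ⁻¹ } :=
  torus_valued_maps_in_commutator_subgroup_general IX X γ hpath
end
end

section
/- Let 𝔤 be the Lie algebra of G, let 𝒲 be an open neighborhood of 0 in 𝔤 and 𝒱 an open neighborhood of 1 in G such that exp : 𝒲 → 𝒱 is a diffeomorphism. Let a ∈ X and let γ ∈ M_0(G) be equal to 1 on a neighborhood of a (equivalently, supp(γ) ⊆ X ∖ {a}). Then there exist an open neighborhood 𝒰 of a in X and smooth maps ξ_1, …, ξ_k : X → 𝔤 such that ξ_i(x) ∈ 𝒲 for all i and all x ∈ X, ξ_i(x) = 0 for all i and all x ∈ 𝒰, and γ(x) = exp(ξ_1(x)) exp(ξ_2(x)) ⋯ exp(ξ_k(x)) for all x ∈ X. -/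
/-!
Normalise a path `Γ` from `γ` to `1` so that `Γ(a, t) = 1` for all `t`; by compactness of
`[0, 1]`, the whole path then stays, for `x` near `a`, in a neighbourhood of `1` on which a
smooth map `A : G → 𝒱` (the identity near `1`, built from a cut-off of `log`) is the identity.
Hence `γ = (A ∘ γ) · B(·, 0)` with `B = (A ∘ Γ)⁻¹ Γ`, and `B(x, t) = 1` for `x` near `a`.
Cutting `[0, 1]` into intervals so short that `B(x, s) B(x, s')⁻¹ ∈ 𝒱` (compactness of `X`)
telescopes `B(·, 0)` into a product of smooth maps into `𝒱`, each equal to `1` near `a`;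
their logarithms are the `ξᵢ`.
-/

local notation "∞" => (⊤ : ℕ∞)

open scoped Manifold Topology
open Filter

noncomputable section

/-- The identity component `M₀(G)` of the group of smooth maps from a manifold `X` to a Lie
group `G`: the subgroup of smooth maps which can be joined to the constant map `1` by a
continuous path of smooth maps. -/
def smoothMapsIdComp
    {EX : Type*} [NormedAddCommGroup EX] [NormedSpace ℝ EX]
    {HX : Type*} [TopologicalSpace HX] (IX : ModelWithCorners ℝ EX HX)
    (X : Type*) [TopologicalSpace X] [ChartedSpace HX X]
    {EG : Type*} [NormedAddCommGroup EG] [NormedSpace ℝ EG]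
    {HG : Type*} [TopologicalSpace HG] (IG : ModelWithCorners ℝ EG HG)
    (G : Type*) [TopologicalSpace G] [ChartedSpace HG G] [Group G] [LieGroup IG (⊤ : ℕ∞) G] :
    Subgroup C^∞⟮IX, X; IG, G⟯ where
  carrier := { γ | ∃ Γ : X × unitInterval → G, Continuous Γ ∧
      (∀ t : unitInterval, ContMDiff IX IG (⊤ : ℕ∞) fun x => Γ (x, t)) ∧
      (∀ x, Γ (x, 0) = γ x) ∧ (∀ x, Γ (x, 1) = 1) }
  one_mem' := ⟨fun _ => 1, continuous_const, fun _ => contMDiff_const,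
    fun _ => rfl, fun _ => rfl⟩
  mul_mem' := by
    haveI : IsTopologicalGroup G := topologicalGroup_of_lieGroup (I := IG) (n := (⊤ : ℕ∞)) (G := G)
    rintro γ δ ⟨Γ, hΓc, hΓs, hΓ0, hΓ1⟩ ⟨Δ, hΔc, hΔs, hΔ0, hΔ1⟩
    refine ⟨fun p => Γ p * Δ p, hΓc.mul hΔc, fun t => (hΓs t).mul (hΔs t),
      fun x => ?_, fun x => show Γ (x, 1) * Δ (x, 1) = 1 by rw [hΓ1, hΔ1, one_mul]⟩
    show Γ (x, 0) * Δ (x, 0) = (γ * δ) x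
    rw [hΓ0, hΔ0]; rfl
  inv_mem' := by
    haveI : IsTopologicalGroup G := topologicalGroup_of_lieGroup (I := IG) (n := (⊤ : ℕ∞)) (G := G)
    rintro γ ⟨Γ, hΓc, hΓs, hΓ0, hΓ1⟩
    refine ⟨fun p => (Γ p)⁻¹, hΓc.inv, fun t => (hΓs t).inv,
      fun x => ?_, fun x => show (Γ (x, 1))⁻¹ = 1 by rw [hΓ1, inv_one]⟩
    show (Γ (x, 0))⁻¹ = γ⁻¹ x
    rw [hΓ0]; rfl

open Set

theorem exists_contDiff_hasCompactSupport_eventuallyEq_id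
    {E : Type*} [NormedAddCommGroup E] [NormedSpace ℝ E] [FiniteDimensional ℝ E]
    {W : Set E} (hW : IsOpen W) (hW0 : (0 : E) ∈ W) :
    ∃ η : E → E, ContDiff ℝ ∞ η ∧ HasCompactSupport η ∧ tsupport η ⊆ W ∧ (∀ v, η v ∈ W) ∧
      η =ᶠ[𝓝 0] id := by
  obtain ⟨R, hR, hRW⟩ := Metric.isOpen_iff.1 hW 0 hW0
  let f : ContDiffBump (0 : E) := ⟨R / 4, R / 2, by positivity, by linarith⟩
  have hrOut : f.rOut = R / 2 := rfl
  have hfW : tsupport f ⊆ W := by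
    rw [f.tsupport_eq, hrOut]
    exact (Metric.closedBall_subset_ball (by linarith)).trans hRW
  refine ⟨fun v => f v • v, f.contDiff.smul contDiff_id, f.hasCompactSupport.smul_right,
    (tsupport_smul_subset_left _ _).trans hfW, fun v => hRW ?_, ?_⟩
  · rw [mem_ball_zero_iff, norm_smul, Real.norm_of_nonneg f.nonneg]
    by_cases hv : v ∈ Function.support f
    · rw [f.support_eq, mem_ball_zero_iff, hrOut] at hv
      calc f v * ‖v‖ ≤ 1 * ‖v‖ := by gcongr; exact f.le_one
        _ < R := by linarith
    · rw [Function.notMem_support.1 hv, zero_mul]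
      exact hR
  · filter_upwards [f.eventuallyEq_one] with v hv
    simp [hv]

theorem exists_contMDiff_mapsTo_eventuallyEq_id
    {E : Type*} [NormedAddCommGroup E] [NormedSpace ℝ E] [FiniteDimensional ℝ E]
    {EM : Type*} [NormedAddCommGroup EM] [NormedSpace ℝ EM]
    {HM : Type*} [TopologicalSpace HM] {I : ModelWithCorners ℝ EM HM}
    {M : Type*} [TopologicalSpace M] [T2Space M] [ChartedSpace HM M]
    {e : E → M} {l : M → E} {W : Set E} {V : Set M}
    (hW : IsOpen W) (hW0 : (0 : E) ∈ W) (hV : IsOpen V)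
    (he : ContMDiffOn 𝓘(ℝ, E) I ∞ e W) (hl : ContMDiffOn I 𝓘(ℝ, E) ∞ l V)
    (heW : MapsTo e W V) (hel : RightInvOn l e V) (hl0 : l (e 0) = 0) :
    ∃ A : M → M, ContMDiff I I ∞ A ∧ (∀ y, A y ∈ V) ∧ A =ᶠ[𝓝 (e 0)] id := by
  classical
  obtain ⟨η, hη, hηc, hηW, hηW', hη0⟩ := exists_contDiff_hasCompactSupport_eventuallyEq_id hW hW0
  set K := e '' tsupport η
  have hK : IsClosed K := (hηc.image_of_continuousOn (he.continuousOn.mono hηW)).isClosed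
  have hKV : K ⊆ V := (image_mono hηW).trans heW.image_subset
  let A : M → M := fun y => if y ∈ V then e (η (l y)) else e 0
  have hAV : EqOn A (e ∘ η ∘ l) V := fun y hy => if_pos hy
  have hAK : EqOn A (fun _ => e 0) Kᶜ := by
    intro y hy
    by_cases hyV : y ∈ V
    · have : l y ∉ tsupport η := fun h => hy ⟨l y, h, hel hyV⟩
      simp [A, hyV, image_eq_zero_of_notMem_tsupport this]
    · exact if_neg hyV
  refine ⟨A, ?_, fun y => ?_, ?_⟩
  · refine contMDiff_of_contMDiffOn_union_of_isOpen ?_ (contMDiffOn_const.congr hAK)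
      (eq_univ_of_forall fun y => (em (y ∈ V)).imp_right fun hy hyK => hy (hKV hyK))
      hV hK.isOpen_compl
    have hηs : ContMDiffOn 𝓘(ℝ, E) 𝓘(ℝ, E) ∞ η univ := (contMDiff_iff_contDiff.2 hη).contMDiffOn
    exact ((he.comp hηs fun v _ => hηW' v).comp hl fun _ _ => mem_univ _).congr hAV
  · by_cases hy : y ∈ V
    · rw [hAV hy]
      exact heW (hηW' _)
    · rw [hAK fun hyK => hy (hKV hyK)]
      exact heW hW0
  · have hl_tendsto : Tendsto l (𝓝 (e 0)) (𝓝 0) := by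
      simpa [hl0] using (hl.continuousOn.continuousAt (hV.mem_nhds (heW hW0))).tendsto
    filter_upwards [hV.mem_nhds (heW hW0), hl_tendsto.eventually hη0] with y hyV hy
    rw [hAV hyV, Function.comp_apply, Function.comp_apply, hy, id, hel hyV, id]

theorem exists_pos_forall_dist_lt_mem {Y T : Type*} [TopologicalSpace Y] [CompactSpace Y]
    [MetricSpace T] [CompactSpace T] {W : Set (Y × T × T)} (hW : IsOpen W)
    (hdiag : ∀ y t, (y, t, t) ∈ W) :
    ∃ δ > 0, ∀ y t t', dist t t' < δ → (y, t, t') ∈ W := by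
  obtain ⟨δ, hδ, hδle⟩ := hW.isClosed_compl.isCompact.exists_forall_le'
    (f := fun q : Y × T × T => dist q.2.1 q.2.2) (Continuous.continuousOn (by fun_prop))
    fun ⟨y, t, t'⟩ hq => dist_pos.2 fun (h : t = t') => hq (h ▸ hdiag y t)
  exact ⟨δ, hδ, fun y t t' h => by_contra fun hq => (hδle _ hq).not_gt h⟩

theorem unitInterval.exists_subdivision {δ : ℝ} (hδ : 0 < δ) :
    ∃ (m : ℕ) (s : ℕ → unitInterval), s 0 = 0 ∧ s m = 1 ∧ ∀ j, dist (s j) (s (j + 1)) < δ := by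
  obtain ⟨n, hn⟩ := exists_nat_one_div_lt hδ
  have hn0 : (0 : ℝ) < n + 1 := by positivity
  refine ⟨n + 1, fun j => projIcc 0 1 zero_le_one (j / (n + 1)), ?_, ?_, fun j => ?_⟩
  · simp
  · simp [div_self hn0.ne']
  · rw [Subtype.dist_eq, Real.dist_eq]
    refine (abs_projIcc_sub_projIcc _).trans_lt ?_
    rw [show (j : ℝ) / (n + 1) - ((j + 1 : ℕ) : ℝ) / (n + 1) = -(1 / (n + 1)) by
      push_cast; field_simp; ring, abs_neg, abs_of_pos (by positivity)]
    exact hn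

section SmoothMaps

variable {EX : Type*} [NormedAddCommGroup EX] [NormedSpace ℝ EX]
    {HX : Type*} [TopologicalSpace HX] {IX : ModelWithCorners ℝ EX HX}
    {X : Type*} [TopologicalSpace X] [ChartedSpace HX X]
    {EG : Type*} [NormedAddCommGroup EG] [NormedSpace ℝ EG]
    {HG : Type*} [TopologicalSpace HG] {IG : ModelWithCorners ℝ EG HG}
    {G : Type*} [TopologicalSpace G] [ChartedSpace HG G] [Group G]

variable (IX IG) in
def smoothMapsIntoEqOneOn (V : Set G) (U : Set X) : Set (X → G) :=
  {f | ContMDiff IX IG ∞ f ∧ (∀ x, f x ∈ V) ∧ ∀ x ∈ U, f x = 1}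

theorem exists_ofFn_prod_eq_of_mem_closure_smoothMapsIntoEqOneOn
    {𝔤 : Type*} [NormedAddCommGroup 𝔤] [NormedSpace ℝ 𝔤]
    {expG : 𝔤 → G} {logG : G → 𝔤} {W : Set 𝔤} {V : Set G}
    (hlog : ContMDiffOn IG 𝓘(ℝ, 𝔤) ∞ logG V) (hlogW : MapsTo logG V W)
    (hexplog : RightInvOn logG expG V) (hlog1 : logG 1 = 0) {U : Set X} {f : X → G}
    (hf : f ∈ Submonoid.closure (smoothMapsIntoEqOneOn IX IG V U)) :
    ∃ (k : ℕ) (ξ : Fin k → X → 𝔤),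
      (∀ i, ContMDiff IX 𝓘(ℝ, 𝔤) ∞ (ξ i)) ∧ (∀ i x, ξ i x ∈ W) ∧ (∀ i, ∀ x ∈ U, ξ i x = 0) ∧
      ∀ x, f x = (List.ofFn fun i => expG (ξ i x)).prod := by
  obtain ⟨l, hl, rfl⟩ := Submonoid.exists_list_of_mem_closure hf
  have hmem (i : Fin l.length) := hl _ (List.get_mem l i)
  refine ⟨l.length, fun i => logG ∘ l.get i,
    fun i => hlog.comp_contMDiff (hmem i).1 (hmem i).2.1, fun i x => hlogW ((hmem i).2.1 x),
    fun i x hx => show logG (l.get i x) = 0 by rw [(hmem i).2.2 x hx, hlog1], fun x => ?_⟩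
  have hexp : (fun i => expG ((logG ∘ l.get i) x)) = (fun g : X → G => g x) ∘ l.get :=
    funext fun i => hexplog ((hmem i).2.1 x)
  rw [hexp, ← List.map_ofFn, List.ofFn_get, Pi.list_prod_apply]

variable [LieGroup IG ∞ G]

theorem exists_homotopy_eq_one_at {γ : C^∞⟮IX, X; IG, G⟯} (hγ : γ ∈ smoothMapsIdComp IX X IG G)
    {a : X} (hγa : γ a = 1) :
    ∃ Γ : X × unitInterval → G, Continuous Γ ∧ (∀ t, ContMDiff IX IG ∞ fun x => Γ (x, t)) ∧
      (∀ x, Γ (x, 0) = γ x) ∧ (∀ x, Γ (x, 1) = 1) ∧ ∀ t, Γ (a, t) = 1 := by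
  have := topologicalGroup_of_lieGroup IG ∞ (G := G)
  obtain ⟨Γ, hΓc, hΓs, hΓ0, hΓ1⟩ := hγ
  refine ⟨fun p => Γ p / Γ (a, p.2), by fun_prop,
    fun t => (hΓs t).div (contMDiff_const (c := Γ (a, t))), fun x => ?_, fun x => ?_,
    fun t => div_self' _⟩
  · simp only [hΓ0, hγa, div_one]
  · simp only [hΓ1, div_one]

theorem mem_closure_smoothMapsIntoEqOneOn_of_homotopy [CompactSpace X] {V : Set G}
    (hV : IsOpen V) (hV1 : (1 : G) ∈ V) {U : Set X} {B : X × unitInterval → G}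
    (hBc : Continuous B) (hBs : ∀ t, ContMDiff IX IG ∞ fun x => B (x, t))
    (hB1 : ∀ x, B (x, 1) = 1) (hBU : ∀ x ∈ U, ∀ t, B (x, t) = 1) :
    (fun x => B (x, 0)) ∈ Submonoid.closure (smoothMapsIntoEqOneOn IX IG V U) := by
  have := topologicalGroup_of_lieGroup IG ∞ (G := G)
  obtain ⟨δ, hδ, hBδ⟩ := exists_pos_forall_dist_lt_mem
    (W := {q : X × unitInterval × unitInterval | B (q.1, q.2.1) / B (q.1, q.2.2) ∈ V})
    (hV.preimage (by fun_prop)) fun x t => by simp [hV1]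
  obtain ⟨m, s, hs0, hsm, hs⟩ := unitInterval.exists_subdivision hδ
  let F : ℕ → X → G := fun j x => B (x, s j)
  have hF : ((List.range m).map fun j => F j / F (j + 1)).prod = fun x => B (x, 0) := by
    rw [List.prod_range_div', show F m = 1 from funext fun x => by simp [F, hsm, hB1], div_one]
    simp [F, hs0]
  rw [← hF]
  refine Submonoid.list_prod_mem _ fun f hf => Submonoid.subset_closure ?_
  obtain ⟨j, -, rfl⟩ := List.mem_map.1 hf
  exact ⟨(hBs _).div (hBs _), fun x => hBδ x _ _ (hs j), fun x hx => by simp [F, hBU x hx]⟩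

end SmoothMaps

theorem smoothMapsIdComp_factorization_vanishing_near_point_general
    {EX : Type*} [NormedAddCommGroup EX] [NormedSpace ℝ EX]
    {HX : Type*} [TopologicalSpace HX] (IX : ModelWithCorners ℝ EX HX)
    (X : Type*) [TopologicalSpace X] [ChartedSpace HX X]
    [CompactSpace X]
    {EG : Type*} [NormedAddCommGroup EG] [NormedSpace ℝ EG]
    {HG : Type*} [TopologicalSpace HG] (IG : ModelWithCorners ℝ EG HG)
    (G : Type*) [TopologicalSpace G] [ChartedSpace HG G] [Group G] [LieGroup IG (⊤ : ℕ∞) G]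
    {𝔤 : Type*} [NormedAddCommGroup 𝔤] [NormedSpace ℝ 𝔤] [FiniteDimensional ℝ 𝔤]
    (expG : 𝔤 → G) (logG : G → 𝔤) (𝒲 : Set 𝔤) (𝒱 : Set G)
    (h𝒲open : IsOpen 𝒲) (h𝒲0 : (0 : 𝔤) ∈ 𝒲)
    (h𝒱open : IsOpen 𝒱) (h𝒱1 : (1 : G) ∈ 𝒱)
    (hexp0 : expG 0 = 1) (hbij : Set.BijOn expG 𝒲 𝒱)
    (hexp_smooth : ContMDiffOn 𝓘(ℝ, 𝔤) IG (⊤ : ℕ∞) expG 𝒲)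
    (hlog_smooth : ContMDiffOn IG 𝓘(ℝ, 𝔤) (⊤ : ℕ∞) logG 𝒱)
    (hlogexp : ∀ ξ ∈ 𝒲, logG (expG ξ) = ξ)
    (a : X) (γ : C^∞⟮IX, X; IG, G⟯) (hγ : γ ∈ smoothMapsIdComp IX X IG G)
    (hγa : ∀ᶠ x in 𝓝 a, γ x = 1) :
    ∃ 𝒰 : Set X, IsOpen 𝒰 ∧ a ∈ 𝒰 ∧
      ∃ (k : ℕ) (ξ : Fin k → X → 𝔤),
        (∀ i, ContMDiff IX 𝓘(ℝ, 𝔤) (⊤ : ℕ∞) (ξ i)) ∧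
        (∀ i x, ξ i x ∈ 𝒲) ∧
        (∀ i, ∀ x ∈ 𝒰, ξ i x = 0) ∧
        (∀ x, γ x = (List.ofFn fun i => expG (ξ i x)).prod) := by
  have := topologicalGroup_of_lieGroup IG (⊤ : ℕ∞) (G := G)
  have : T1Space G := IG.t1Space G
  have hexplog : RightInvOn logG expG 𝒱 := hbij.image_eq ▸ LeftInvOn.rightInvOn_image hlogexp
  have hlog𝒲 : MapsTo logG 𝒱 𝒲 := LeftInvOn.mapsTo hlogexp hbij.surjOn
  have hlog1 : logG 1 = 0 := hexp0 ▸ hlogexp 0 h𝒲0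
  obtain ⟨A, hA, hA𝒱, hAid⟩ := exists_contMDiff_mapsTo_eventuallyEq_id h𝒲open h𝒲0 h𝒱open
    hexp_smooth hlog_smooth hbij.mapsTo hexplog (hlogexp 0 h𝒲0)
  rw [hexp0] at hAid
  have hA1 : A 1 = 1 := hAid.self_of_nhds
  obtain ⟨Γ, hΓc, hΓs, hΓ0, hΓ1, hΓa⟩ := exists_homotopy_eq_one_at hγ hγa.self_of_nhds
  have hΓA : ∀ᶠ x in 𝓝 a, ∀ t, A (Γ (x, t)) = Γ (x, t) := by
    simpa using isCompact_univ.eventually_forall_of_forall_eventually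
      (P := fun x t => A (Γ (x, t)) = Γ (x, t)) fun t _ =>
        (hΓc.tendsto (a, t)).eventually ((hΓa t).symm ▸ hAid)
  obtain ⟨𝒰, h𝒰, h𝒰open, ha𝒰⟩ := eventually_nhds_iff.1 (hγa.and hΓA)
  refine ⟨𝒰, h𝒰open, ha𝒰, exists_ofFn_prod_eq_of_mem_closure_smoothMapsIntoEqOneOn
    hlog_smooth hlog𝒲 hexplog hlog1 ?_⟩
  have hγ_eq : ⇑γ = (A ∘ γ) * fun x => (A (Γ (x, 0)))⁻¹ * Γ (x, 0) := by
    funext x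
    simp [hΓ0]
  rw [hγ_eq]
  refine mul_mem (Submonoid.subset_closure
    ⟨hA.comp γ.contMDiff, fun x => hA𝒱 _, fun x hx => by simp [(h𝒰 x hx).1, hA1]⟩) ?_
  exact mem_closure_smoothMapsIntoEqOneOn_of_homotopy h𝒱open h𝒱1
    ((hA.continuous.comp hΓc).inv.mul hΓc) (fun t => (hA.comp (hΓs t)).inv.mul (hΓs t))
    (fun x => by simp [hΓ1, hA1]) fun x hx t => by simp [(h𝒰 x hx).2 t]

/-- **Lemma (factorization through exponentials vanishing near a point).** Let `𝒲` be an open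
neighbourhood of `0` in the Lie algebra `𝔤` of `G` and `𝒱` an open neighbourhood of `1` in
`G` such that `exp : 𝒲 → 𝒱` is a diffeomorphism.  If `a ∈ X` and `γ ∈ M₀(G)` equals `1` on a
neighbourhood of `a`, then there are an open neighbourhood `𝒰` of `a` and smooth maps
`ξ_1, …, ξ_k : X → 𝔤` with values in `𝒲`, vanishing on `𝒰`, such that
`γ = exp(ξ_1) ⋯ exp(ξ_k)` pointwise. -/
theorem smoothMapsIdComp_factorization_vanishing_near_point
    {EX : Type*} [NormedAddCommGroup EX] [NormedSpace ℝ EX]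
    {HX : Type*} [TopologicalSpace HX] (IX : ModelWithCorners ℝ EX HX)
    (X : Type*) [TopologicalSpace X] [ChartedSpace HX X]
    [IsManifold IX (⊤ : ℕ∞) X] [CompactSpace X] [IX.Boundaryless]
    {EG : Type*} [NormedAddCommGroup EG] [NormedSpace ℝ EG]
    {HG : Type*} [TopologicalSpace HG] (IG : ModelWithCorners ℝ EG HG)
    (G : Type*) [TopologicalSpace G] [ChartedSpace HG G] [Group G] [LieGroup IG (⊤ : ℕ∞) G]
    [IsManifold IG (⊤ : ℕ∞) G] [CompactSpace G] [ConnectedSpace G]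
    [LieAlgebra.IsSimple ℝ (LeftInvariantDerivation IG G)]
    {𝔤 : Type*} [NormedAddCommGroup 𝔤] [NormedSpace ℝ 𝔤] [FiniteDimensional ℝ 𝔤]
    (expG : 𝔤 → G) (logG : G → 𝔤) (𝒲 : Set 𝔤) (𝒱 : Set G)
    (h𝒲open : IsOpen 𝒲) (h𝒲0 : (0 : 𝔤) ∈ 𝒲)
    (h𝒱open : IsOpen 𝒱) (h𝒱1 : (1 : G) ∈ 𝒱)
    (hexp0 : expG 0 = 1) (hbij : Set.BijOn expG 𝒲 𝒱)
    (hexp_smooth : ContMDiffOn 𝓘(ℝ, 𝔤) IG (⊤ : ℕ∞) expG 𝒲)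
    (hlog_smooth : ContMDiffOn IG 𝓘(ℝ, 𝔤) (⊤ : ℕ∞) logG 𝒱)
    (hlogexp : ∀ ξ ∈ 𝒲, logG (expG ξ) = ξ)
    (a : X) (γ : C^∞⟮IX, X; IG, G⟯) (hγ : γ ∈ smoothMapsIdComp IX X IG G)
    (hγa : ∀ᶠ x in 𝓝 a, γ x = 1) :
    ∃ 𝒰 : Set X, IsOpen 𝒰 ∧ a ∈ 𝒰 ∧
      ∃ (k : ℕ) (ξ : Fin k → X → 𝔤),
        (∀ i, ContMDiff IX 𝓘(ℝ, 𝔤) (⊤ : ℕ∞) (ξ i)) ∧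
        (∀ i x, ξ i x ∈ 𝒲) ∧
        (∀ i, ∀ x ∈ 𝒰, ξ i x = 0) ∧
        (∀ x, γ x = (List.ofFn fun i => expG (ξ i x)).prod) :=
  smoothMapsIdComp_factorization_vanishing_near_point_general IX X IG G expG logG 𝒲 𝒱 h𝒲open h𝒲0
    h𝒱open h𝒱1 hexp0 hbij hexp_smooth hlog_smooth hlogexp a γ hγ hγa
end
end
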